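/- arXiv:1609.05278 — 2 statements merged into one kernel-verified Lean document; each statement's English description precedes it below -/
import Mathlib

section
/- Let n be a positive integer and 0 < p < 1. Then there exists a constant C > 0, depending only on n and p, such that for all R > 0, all x₀, x₁ ∈ ℝ^n, and all Schwartz functions f, g : ℝ^n → ℂ with supp 𝓕f ⊆ B(x₀, R) and supp 𝓕g ⊆ B(x₁, R), one has ‖|f| * |g|‖_{L^p} ≤ C·R^{n(1/p − 1)}·‖f‖_{L^p}·‖g‖_{L^p}, where (|f| * |g|)(x) = ∫_{ℝ^n} |f(y)|·|g(x − y)| dy. -/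
open MeasureTheory Real Function
open scoped ENNReal NNReal FourierTransform

noncomputable section

/-- The `ℓ^q` norm of an `ℝ≥0∞`-valued family, with the supremum convention at `q = ∞`. -/
def lqNorm {ι : Type*} (q : ℝ≥0∞) (w : ι → ℝ≥0∞) : ℝ≥0∞ :=
  if q = ∞ then ⨆ i, w i else (∑' i, w i ^ q.toReal) ^ (1 / q.toReal)

/-- The point of `ℝ^n` corresponding to an integer vector `k ∈ ℤ^n`. -/
def intVec {n : ℕ} (k : Fin n → ℤ) : EuclideanSpace ℝ (Fin n) := WithLp.toLp 2 fun i => (k i : ℝ)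

/-- The japanese bracket `⟨k⟩ = (1 + |k|²)^{1/2}`. -/
def jap {n : ℕ} (k : Fin n → ℤ) : ℝ := (1 + ‖intVec k‖ ^ 2) ^ ((1 : ℝ) / 2)

/-- The frequency-uniform decomposition operator `□_k f = 𝓕⁻¹ (σ(· - k) · 𝓕 f)`. -/
def box {n : ℕ} (σ : EuclideanSpace ℝ (Fin n) → ℝ) (k : Fin n → ℤ)
    (f : EuclideanSpace ℝ (Fin n) → ℂ) : EuclideanSpace ℝ (Fin n) → ℂ :=
  𝓕⁻ fun ξ => (σ (ξ - intVec k) : ℂ) * 𝓕 f ξ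

/-- The modulation space quasi-norm `‖f‖_{M^s_{p,q}}`. -/
def modNorm {n : ℕ} (σ : EuclideanSpace ℝ (Fin n) → ℝ) (s : ℝ) (p q : ℝ≥0∞)
    (f : EuclideanSpace ℝ (Fin n) → ℂ) : ℝ≥0∞ :=
  lqNorm q fun k : Fin n → ℤ =>
    ENNReal.ofReal (jap k ^ s) * eLpNorm (box σ k f) p volume

/-- The dyadic Littlewood–Paley functions `ψ_j` built from `φ`. -/
def psi {n : ℕ} (φ : EuclideanSpace ℝ (Fin n) → ℝ) : ℕ → EuclideanSpace ℝ (Fin n) → ℝ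
  | 0 => φ
  | j + 1 => fun ξ => φ ((2 : ℝ) ^ (-(j + 1 : ℤ)) • ξ) - φ ((2 : ℝ) ^ (-(j : ℤ)) • ξ)

/-- The Littlewood–Paley operator `Δ_j f = 𝓕⁻¹ (ψ_j · 𝓕 f)`. -/
def deltaOp {n : ℕ} (φ : EuclideanSpace ℝ (Fin n) → ℝ) (j : ℕ)
    (f : EuclideanSpace ℝ (Fin n) → ℂ) : EuclideanSpace ℝ (Fin n) → ℂ :=
  𝓕⁻ fun ξ => (psi φ j ξ : ℂ) * 𝓕 f ξ

/-- The Triebel–Lizorkin quasi-norm `‖f‖_{F^s_{p,r}}` (for finite `p`). -/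
def tlNorm {n : ℕ} (φ : EuclideanSpace ℝ (Fin n) → ℝ) (s : ℝ) (p r : ℝ≥0∞)
    (f : EuclideanSpace ℝ (Fin n) → ℂ) : ℝ≥0∞ :=
  (∫⁻ x, (lqNorm r fun j : ℕ =>
      ENNReal.ofReal ((2 : ℝ) ^ ((j : ℝ) * s) * ‖deltaOp φ j f x‖)) ^ p.toReal) ^
    (1 / p.toReal)

/-- `σ` is an admissible function for the frequency-uniform decomposition: smooth, valued in
`[0,1]`, compactly supported, and its integer translates form a partition of unity. -/
structure IsUnifPartition {n : ℕ} (σ : EuclideanSpace ℝ (Fin n) → ℝ) : Prop where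
  smooth : ContDiff ℝ (⊤ : ℕ∞) σ
  mem_Icc : ∀ ξ, σ ξ ∈ Set.Icc (0 : ℝ) 1
  compactSupport : HasCompactSupport σ
  partition : ∀ ξ : EuclideanSpace ℝ (Fin n),
    HasSum (fun k : Fin n → ℤ => σ (ξ - intVec k)) 1

/-- `φ` is an admissible Littlewood–Paley bump function: smooth, valued in `[0,1]`,
equal to `1` on `{|ξ| ≤ 4/3}` and vanishing on `{|ξ| ≥ 3/2}`. -/
structure IsLPBump {n : ℕ} (φ : EuclideanSpace ℝ (Fin n) → ℝ) : Prop where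
  smooth : ContDiff ℝ (⊤ : ℕ∞) φ
  mem_Icc : ∀ ξ, φ ξ ∈ Set.Icc (0 : ℝ) 1
  eq_one : ∀ ξ : EuclideanSpace ℝ (Fin n), ‖ξ‖ ≤ 4 / 3 → φ ξ = 1
  eq_zero : ∀ ξ : EuclideanSpace ℝ (Fin n), 3 / 2 ≤ ‖ξ‖ → φ ξ = 0

/-- The weighted sequence quasi-norm `‖a‖_{ℓ^{s,0}_q}` on `ℤ^n`. -/
def lqNormZ {n : ℕ} (q : ℝ≥0∞) (s : ℝ) (a : (Fin n → ℤ) → ℂ) : ℝ≥0∞ :=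
  lqNorm q fun k => ENNReal.ofReal (jap k ^ s) * ‖a k‖₊

/-- The weighted dyadic sequence quasi-norm `‖b‖_{ℓ^{s,1}_q}` on `ℕ`. -/
def lqNormN (q : ℝ≥0∞) (s : ℝ) (b : ℕ → ℂ) : ℝ≥0∞ :=
  lqNorm q fun j : ℕ => ENNReal.ofReal ((2 : ℝ) ^ ((j : ℝ) * s)) * ‖b j‖₊

/-- The partial derivative in the `i`-th coordinate direction. -/
def pd {n : ℕ} (i : Fin n) (g : EuclideanSpace ℝ (Fin n) → ℂ) :
    EuclideanSpace ℝ (Fin n) → ℂ :=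
  fun x => fderiv ℝ g x (EuclideanSpace.single i 1)

/-- The iterated partial derivative `∂^γ` for a multi-index `γ ∈ ℕ^n`. -/
def pdMulti {n : ℕ} (γ : Fin n → ℕ) (g : EuclideanSpace ℝ (Fin n) → ℂ) :
    EuclideanSpace ℝ (Fin n) → ℂ :=
  (((List.finRange n).map fun i => (pd i)^[γ i]).foldr (· ∘ ·) id) g

section AuxConv

open Metric SchwartzMap
open scoped RealInnerProductSpace

private lemma aux_char_mul (a b : ℝ) :
    ((𝐞 a : Circle) : ℂ) * ((𝐞 b : Circle) : ℂ) = ((𝐞 (a + b) : Circle) : ℂ) := by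
  rw [← Circle.coe_mul]
  norm_cast
  exact congrArg _ (AddChar.map_add_eq_mul 𝐞 a b).symm

private lemma aux_fourier_support {n : ℕ} (f g : SchwartzMap (EuclideanSpace ℝ (Fin n)) ℂ)
    {x₀ x₁ : EuclideanSpace ℝ (Fin n)} {R : ℝ}
    (hf : Function.support (𝓕 ⇑f) ⊆ Metric.closedBall x₀ R)
    (hg : Function.support (𝓕 ⇑g) ⊆ Metric.closedBall x₁ R)
    (x : EuclideanSpace ℝ (Fin n)) {ξ : EuclideanSpace ℝ (Fin n)}
    (hξ : ξ ∉ Metric.closedBall (x₀ - x₁) (2 * R)) :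
    𝓕 (fun y => f y * g (x - y)) ξ = 0 := by
  set G : EuclideanSpace ℝ (Fin n) → ℂ := 𝓕 ⇑g with hGdef
  have hGschwartz : ⇑(fourierTransformCLM ℂ g) = G := rfl
  have hGint : Integrable G := by
    rw [← hGschwartz]; exact (fourierTransformCLM ℂ g).integrable
  have hGcont : Continuous G := by
    rw [← hGschwartz]; exact (fourierTransformCLM ℂ g).continuous
  have hginv : ∀ z, g z = ∫ η, ((𝐞 ⟪η, z⟫ : Circle) : ℂ) * G η := by
    intro z
    have h0 : 𝓕⁻ G z = g z :=
      congrFun (g.continuous.fourierInv_fourier_eq g.integrable hGint) z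
    rw [← h0, Real.fourierInv_eq]
    simp_rw [Circle.smul_def, smul_eq_mul]
  set F : EuclideanSpace ℝ (Fin n) → EuclideanSpace ℝ (Fin n) → ℂ := fun y η =>
    ((𝐞 (-⟪y, ξ⟫) : Circle) : ℂ) * (((𝐞 ⟪η, x - y⟫ : Circle) : ℂ) * (f y * G η)) with hFdef
  have hstep : ∀ y, (𝐞 (-⟪y, ξ⟫) : Circle) • (f y * g (x - y)) = ∫ η, F y η := by
    intro y
    rw [Circle.smul_def, smul_eq_mul, hginv (x - y), ← MeasureTheory.integral_const_mul,
      ← MeasureTheory.integral_const_mul]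
    congr 1; funext η; simp only [hFdef]; ring
  have hcoe_cont : Continuous ((↑) : Circle → ℂ) := continuous_subtype_val
  have hFcont : Continuous (uncurry F) := by
    simp only [hFdef, uncurry]
    refine Continuous.mul ?_ (Continuous.mul ?_ ?_)
    · exact hcoe_cont.comp (Real.continuous_fourierChar.comp
        ((continuous_fst.inner continuous_const).neg))
    · exact hcoe_cont.comp (Real.continuous_fourierChar.comp
        (continuous_snd.inner (continuous_const.sub continuous_fst)))
    · exact ((f.continuous.comp continuous_fst).mul (hGcont.comp continuous_snd))
  have hFint : Integrable (uncurry F) (volume.prod volume) := by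
    refine MeasureTheory.Integrable.mono' ((f.integrable.norm).mul_prod hGint.norm)
      hFcont.aestronglyMeasurable (ae_of_all _ fun z => ?_)
    have h1 : ∀ r : ℝ, ‖((𝐞 r : Circle) : ℂ)‖ = 1 := fun r => by
      exact Circle.norm_coe _
    simp only [hFdef, uncurry, norm_mul, h1, one_mul]
    exact le_rfl
  have hinner : ∀ η, ∫ y, F y η = 0 := by
    intro η
    by_cases hGη : G η = 0
    · simp [hFdef, hGη]
    · have hηball : η ∈ Metric.closedBall x₁ R := hg (Function.mem_support.mpr hGη)
      have hfzero : 𝓕 ⇑f (ξ + η) = 0 := by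
        by_contra h
        have hmem : ξ + η ∈ Metric.closedBall x₀ R := hf (Function.mem_support.mpr h)
        apply hξ
        rw [Metric.mem_closedBall] at hmem hηball ⊢
        have habel : ξ - (x₀ - x₁) = (ξ + η - x₀) - (η - x₁) := by abel
        have hd : dist ξ (x₀ - x₁) ≤ dist (ξ + η) x₀ + dist η x₁ := by
          rw [dist_eq_norm, dist_eq_norm, dist_eq_norm, habel]
          exact norm_sub_le _ _
        linarith
      have hptwise : ∀ y, F y η =
          (((𝐞 ⟪η, x⟫ : Circle) : ℂ) * G η) *
            (((𝐞 (-⟪y, ξ + η⟫) : Circle) : ℂ) * f y) := by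
        intro y
        have hexp : -⟪y, ξ⟫ + ⟪η, x - y⟫ = ⟪η, x⟫ + -⟪y, ξ + η⟫ := by
          rw [inner_sub_right, inner_add_right, real_inner_comm η y]
          ring
        calc F y η = (((𝐞 (-⟪y, ξ⟫) : Circle) : ℂ) * ((𝐞 ⟪η, x - y⟫ : Circle) : ℂ)) *
              (f y * G η) := by simp only [hFdef]; ring
          _ = ((𝐞 (-⟪y, ξ⟫ + ⟪η, x - y⟫) : Circle) : ℂ) * (f y * G η) := by
              rw [aux_char_mul]
          _ = ((𝐞 (⟪η, x⟫ + -⟪y, ξ + η⟫) : Circle) : ℂ) * (f y * G η) := by rw [hexp]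
          _ = (((𝐞 ⟪η, x⟫ : Circle) : ℂ) * ((𝐞 (-⟪y, ξ + η⟫) : Circle) : ℂ)) *
              (f y * G η) := by rw [aux_char_mul]
          _ = _ := by ring
      calc ∫ y, F y η
          = ∫ y, (((𝐞 ⟪η, x⟫ : Circle) : ℂ) * G η) *
              (((𝐞 (-⟪y, ξ + η⟫) : Circle) : ℂ) * f y) := by simp_rw [hptwise]
        _ = (((𝐞 ⟪η, x⟫ : Circle) : ℂ) * G η) *
              ∫ y, ((𝐞 (-⟪y, ξ + η⟫) : Circle) : ℂ) * f y := by
            rw [MeasureTheory.integral_const_mul]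
        _ = (((𝐞 ⟪η, x⟫ : Circle) : ℂ) * G η) * 𝓕 ⇑f (ξ + η) := by
            rw [Real.fourier_eq]
            simp_rw [Circle.smul_def, smul_eq_mul]
        _ = 0 := by rw [hfzero, mul_zero]
  calc 𝓕 (fun y => f y * g (x - y)) ξ
      = ∫ y, 𝐞 (-⟪y, ξ⟫) • (f y * g (x - y)) := Real.fourier_eq _ _
    _ = ∫ y, ∫ η, F y η := by simp_rw [hstep]
    _ = ∫ η, ∫ y, F y η := MeasureTheory.integral_integral_swap hFint
    _ = 0 := by simp_rw [hinner]; exact integral_zero _ _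

end AuxConv

/-- Weighted convolution inequality in `L^p` for `0 < p < 1`: if `𝓕 f` and `𝓕 g` are
supported in balls of radius `R`, then `‖|f| * |g|‖_{L^p} ≤ C R^{n(1/p-1)} ‖f‖_{L^p} ‖g‖_{L^p}`,
with `C = C(n, p)`. -/
theorem convolution_Lp_of_fourierSupport_ball (n : ℕ) (hn : 0 < n)
    (p : ℝ≥0∞) (hp0 : 0 < p) (hp1 : p < 1) :
    ∃ C : ℝ≥0, 0 < C ∧ ∀ (R : ℝ), 0 < R →
      ∀ (x₀ x₁ : EuclideanSpace ℝ (Fin n)) (f g : SchwartzMap (EuclideanSpace ℝ (Fin n)) ℂ),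
        Function.support (𝓕 ⇑f) ⊆ Metric.closedBall x₀ R →
        Function.support (𝓕 ⇑g) ⊆ Metric.closedBall x₁ R →
        eLpNorm (fun x => ∫ y, ‖f y‖ * ‖g (x - y)‖) p volume ≤
          C * ENNReal.ofReal (R ^ ((n : ℝ) * ((1 / p).toReal - 1))) *
            eLpNorm ⇑f p volume * eLpNorm ⇑g p volume := by
  classical
  have hp_top : p ≠ ∞ := (hp1.trans ENNReal.one_lt_top).ne
  set pr : ℝ := p.toReal with hprdef
  have hpr0 : 0 < pr := ENNReal.toReal_pos hp0.ne' hp_top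
  have hpr1 : pr < 1 := by
    have h := (ENNReal.toReal_lt_toReal hp_top ENNReal.one_ne_top).mpr hp1
    simpa using h
  set q : ℝ := (1 - pr) / pr with hqdef
  have hq0 : 0 < q := div_pos (by linarith) hpr0
  set volB1 : ℝ≥0∞ := volume (Metric.ball (0 : EuclideanSpace ℝ (Fin n)) 1) with hvolB1
  have hvol_pos : 0 < volB1 := Metric.measure_ball_pos _ _ one_pos
  have hvol_fin : volB1 ≠ ∞ := measure_ball_lt_top.ne
  set Cv : ℝ≥0∞ := ENNReal.ofReal ((2 : ℝ) ^ ((n : ℝ) * q)) * volB1 ^ q with hCvdef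
  have hCv_pos : 0 < Cv := ENNReal.mul_pos
    (ENNReal.ofReal_pos.mpr (by positivity : (0:ℝ) < 2 ^ ((n : ℝ) * q))).ne'
    (ENNReal.rpow_pos hvol_pos hvol_fin).ne'
  have hCv_fin : Cv ≠ ∞ :=
    ENNReal.mul_ne_top ENNReal.ofReal_ne_top (ENNReal.rpow_ne_top_of_nonneg hq0.le hvol_fin)
  refine ⟨Cv.toNNReal, ENNReal.toNNReal_pos hCv_pos.ne' hCv_fin, ?_⟩
  intro R hR x₀ x₁ f g hf hg
  -- basic continuity / integrability facts
  have hu_cont : ∀ x : EuclideanSpace ℝ (Fin n), Continuous fun y => f y * g (x - y) :=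
    fun x => f.continuous.mul (g.continuous.comp (continuous_const.sub continuous_id))
  have hu_int : ∀ x : EuclideanSpace ℝ (Fin n), Integrable (fun y => f y * g (x - y)) := by
    intro x
    refine ((f.integrable (μ := volume)).norm.const_mul (SchwartzMap.seminorm ℝ 0 0 g)).mono'
      (hu_cont x).aestronglyMeasurable (ae_of_all _ fun y => ?_)
    rw [norm_mul]
    calc ‖f y‖ * ‖g (x - y)‖ ≤ ‖f y‖ * (SchwartzMap.seminorm ℝ 0 0 g) :=
          mul_le_mul_of_nonneg_left (g.norm_le_seminorm ℝ _) (norm_nonneg _)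
      _ = (SchwartzMap.seminorm ℝ 0 0 g) * ‖f y‖ := mul_comm _ _
  set H : EuclideanSpace ℝ (Fin n) → ℝ≥0∞ :=
    fun x => ∫⁻ y, (‖f y‖₊ : ℝ≥0∞) * (‖g (x - y)‖₊ : ℝ≥0∞) with hHdef
  have hH_eq_norm : ∀ x, H x = ∫⁻ y, (‖f y * g (x - y)‖₊ : ℝ≥0∞) := fun x =>
    lintegral_congr fun y => by rw [nnnorm_mul, ENNReal.coe_mul]
  have hH_fin : ∀ x, H x ≠ ∞ := by
    intro x
    rw [hH_eq_norm x]
    exact (hu_int x).2.ne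
  have hH_int_eq : ∀ x, ∫ y, ‖f y‖ * ‖g (x - y)‖ = (H x).toReal := by
    intro x
    have hm : AEStronglyMeasurable (fun y : EuclideanSpace ℝ (Fin n) => ‖f y‖ * ‖g (x - y)‖)
        volume := by
      refine Continuous.aestronglyMeasurable ?_
      exact f.continuous.norm.mul ((g.continuous.comp (continuous_const.sub continuous_id)).norm)
    rw [MeasureTheory.integral_eq_lintegral_of_nonneg_ae (ae_of_all _ fun y => by positivity) hm]
    congr 1
    refine lintegral_congr fun y => ?_
    rw [ENNReal.ofReal_mul (norm_nonneg _), ofReal_norm, ofReal_norm]; rfl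
  set B : ℝ≥0∞ := volume (Metric.closedBall (x₀ - x₁) (2 * R)) with hBdef
  have hB_fin : B ≠ ∞ := measure_closedBall_lt_top.ne
  -- the key pointwise bound coming from band-limitedness
  have hsup : ∀ x y : EuclideanSpace ℝ (Fin n),
      (‖f y * g (x - y)‖₊ : ℝ≥0∞) ≤ B * H x := by
    intro x y
    set w : EuclideanSpace ℝ (Fin n) → ℂ := 𝓕 (fun z => f z * g (x - z)) with hwdef
    have hw0 : ∀ ξ, ξ ∉ Metric.closedBall (x₀ - x₁) (2 * R) → w ξ = 0 :=
      fun ξ hξ => aux_fourier_support f g hf hg x hξ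
    have hwc : Continuous w :=
      VectorFourier.fourierIntegral_continuous Real.continuous_fourierChar
        (by exact continuous_inner) (hu_int x)
    have hwcs : HasCompactSupport w :=
      HasCompactSupport.intro (isCompact_closedBall _ _) hw0
    have hwint : Integrable w := hwc.integrable_of_hasCompactSupport hwcs
    have hinv : 𝓕⁻ w y = f y * g (x - y) :=
      (hu_int x).fourierInv_fourier_eq hwint ((hu_cont x).continuousAt)
    have hwbd : ∀ ξ, ‖w ξ‖ ≤ (H x).toReal := by
      intro ξ
      refine (VectorFourier.norm_fourierIntegral_le_integral_norm _ _ _ _ _).trans ?_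
      rw [← hH_int_eq x]
      refine le_of_eq (integral_congr_ae (ae_of_all _ fun z => ?_))
      simp [norm_mul]
    have h1 : ‖f y * g (x - y)‖ ≤ (H x).toReal * B.toReal := by
      rw [← hinv, Real.fourierInv_eq_fourier_neg]
      refine (VectorFourier.norm_fourierIntegral_le_integral_norm _ _ _ _ _).trans ?_
      rw [← MeasureTheory.setIntegral_eq_integral_of_forall_compl_eq_zero
        (s := Metric.closedBall (x₀ - x₁) (2 * R)) (fun ξ hξ => by rw [hw0 ξ hξ, norm_zero])]
      have h2 : ‖∫ ξ in Metric.closedBall (x₀ - x₁) (2 * R), ‖w ξ‖‖ ≤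
          (H x).toReal * B.toReal :=
        norm_setIntegral_le_of_norm_le_const measure_closedBall_lt_top
          (C := (H x).toReal) (fun ξ _ => by rw [norm_norm]; exact hwbd ξ)
      calc (∫ ξ in Metric.closedBall (x₀ - x₁) (2 * R), ‖w ξ‖)
          ≤ ‖∫ ξ in Metric.closedBall (x₀ - x₁) (2 * R), ‖w ξ‖‖ := by
            rw [Real.norm_eq_abs]; exact le_abs_self _
        _ ≤ (H x).toReal * B.toReal := h2
    calc (‖f y * g (x - y)‖₊ : ℝ≥0∞) = ENNReal.ofReal ‖f y * g (x - y)‖ :=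
          (ofReal_norm _).symm
      _ ≤ ENNReal.ofReal ((H x).toReal * B.toReal) := ENNReal.ofReal_le_ofReal h1
      _ = H x * B := by
          rw [ENNReal.ofReal_mul ENNReal.toReal_nonneg, ENNReal.ofReal_toReal (hH_fin x),
            ENNReal.ofReal_toReal hB_fin]
      _ = B * H x := mul_comm _ _
  -- pointwise power inequality
  have hkey : ∀ x, H x ^ pr ≤
      B ^ (1 - pr) * ∫⁻ y, (‖f y‖₊ : ℝ≥0∞) ^ pr * (‖g (x - y)‖₊ : ℝ≥0∞) ^ pr := by
    intro x
    set A : ℝ≥0∞ := ∫⁻ y, (‖f y * g (x - y)‖₊ : ℝ≥0∞) ^ pr with hAdef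
    have hAeq : A = ∫⁻ y, (‖f y‖₊ : ℝ≥0∞) ^ pr * (‖g (x - y)‖₊ : ℝ≥0∞) ^ pr :=
      lintegral_congr fun y => by
        rw [nnnorm_mul, ENNReal.coe_mul, ENNReal.mul_rpow_of_nonneg _ _ hpr0.le]
    rcases eq_or_ne (H x) 0 with h0 | h0
    · rw [h0, ENNReal.zero_rpow_of_pos hpr0]; exact zero_le
    have hexp : pr + (1 - pr) = 1 := by ring
    have hBH_fin : B * H x ≠ ∞ := ENNReal.mul_ne_top hB_fin (hH_fin x)
    have hle : H x ≤ (B ^ (1 - pr) * A) * H x ^ (1 - pr) := by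
      calc H x = ∫⁻ y, (‖f y * g (x - y)‖₊ : ℝ≥0∞) := hH_eq_norm x
        _ = ∫⁻ y, (‖f y * g (x - y)‖₊ : ℝ≥0∞) ^ pr *
              (‖f y * g (x - y)‖₊ : ℝ≥0∞) ^ (1 - pr) := lintegral_congr fun y => by
            rw [← ENNReal.rpow_add_of_nonneg pr (1 - pr) hpr0.le (by linarith), hexp,
              ENNReal.rpow_one]
        _ ≤ ∫⁻ y, (‖f y * g (x - y)‖₊ : ℝ≥0∞) ^ pr * (B * H x) ^ (1 - pr) :=
            lintegral_mono fun y =>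
              mul_le_mul_right (ENNReal.rpow_le_rpow (hsup x y) (by linarith)) _
        _ = A * (B * H x) ^ (1 - pr) := lintegral_mul_const' _ _
            (ENNReal.rpow_ne_top_of_nonneg (by linarith) hBH_fin)
        _ = (B ^ (1 - pr) * A) * H x ^ (1 - pr) := by
            rw [ENNReal.mul_rpow_of_nonneg _ _ (by linarith : (0:ℝ) ≤ 1 - pr)]
            ring
    have hHpow_ne_top : H x ^ (1 - pr) ≠ ∞ :=
      ENNReal.rpow_ne_top_of_nonneg (by linarith) (hH_fin x)
    have hHpow_ne_zero : H x ^ (1 - pr) ≠ 0 :=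
      (ENNReal.rpow_pos (pos_iff_ne_zero.mpr h0) (hH_fin x)).ne'
    have hcancel : H x ^ pr * H x ^ (1 - pr) ≤ (B ^ (1 - pr) * A) * H x ^ (1 - pr) := by
      calc H x ^ pr * H x ^ (1 - pr) = H x := by
            rw [← ENNReal.rpow_add_of_nonneg pr (1 - pr) hpr0.le (by linarith), hexp,
              ENNReal.rpow_one]
        _ ≤ (B ^ (1 - pr) * A) * H x ^ (1 - pr) := hle
    have := (ENNReal.mul_le_mul_iff_left hHpow_ne_zero hHpow_ne_top).mp hcancel
    rwa [hAeq] at this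
  -- rewrite the left-hand side
  have hLHS : eLpNorm (fun x => ∫ y, ‖f y‖ * ‖g (x - y)‖) p volume
      = (∫⁻ x, H x ^ pr) ^ (1 / pr) := by
    rw [MeasureTheory.eLpNorm_eq_lintegral_rpow_enorm_toReal hp0.ne' hp_top]
    congr 1
    refine lintegral_congr fun x => ?_
    congr 1
    rw [hH_int_eq x, Real.enorm_eq_ofReal ENNReal.toReal_nonneg,
      ENNReal.ofReal_toReal (hH_fin x)]
  set Af : ℝ≥0∞ := ∫⁻ y, (‖f y‖₊ : ℝ≥0∞) ^ pr with hAfdef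
  set Ag : ℝ≥0∞ := ∫⁻ y, (‖g y‖₊ : ℝ≥0∞) ^ pr with hAgdef
  have hgmeas : Measurable fun y : EuclideanSpace ℝ (Fin n) => (‖g y‖₊ : ℝ≥0∞) ^ pr :=
    (g.continuous.measurable.enorm).pow measurable_const
  have hfmeas : Measurable fun y : EuclideanSpace ℝ (Fin n) => (‖f y‖₊ : ℝ≥0∞) ^ pr :=
    (f.continuous.measurable.enorm).pow measurable_const
  have hswap : (∫⁻ x, ∫⁻ y, (‖f y‖₊ : ℝ≥0∞) ^ pr * (‖g (x - y)‖₊ : ℝ≥0∞) ^ pr) = Af * Ag := by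
    rw [MeasureTheory.lintegral_lintegral_swap]
    · calc (∫⁻ y, ∫⁻ x, (‖f y‖₊ : ℝ≥0∞) ^ pr * (‖g (x - y)‖₊ : ℝ≥0∞) ^ pr)
          = ∫⁻ y, (‖f y‖₊ : ℝ≥0∞) ^ pr * ∫⁻ x, (‖g (x - y)‖₊ : ℝ≥0∞) ^ pr :=
            lintegral_congr fun y => lintegral_const_mul' _ _
              (ENNReal.rpow_ne_top_of_nonneg hpr0.le ENNReal.coe_ne_top)
        _ = ∫⁻ y, (‖f y‖₊ : ℝ≥0∞) ^ pr * Ag := by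
            refine lintegral_congr fun y => ?_
            congr 1
            exact lintegral_sub_right_eq_self (fun z => (‖g z‖₊ : ℝ≥0∞) ^ pr) y
        _ = Af * Ag := lintegral_mul_const'' _ hfmeas.aemeasurable
    · refine (Measurable.aemeasurable ?_)
      have h1 : Measurable fun z : EuclideanSpace ℝ (Fin n) × EuclideanSpace ℝ (Fin n) =>
          (‖f z.2‖₊ : ℝ≥0∞) ^ pr := hfmeas.comp measurable_snd
      have h2 : Measurable fun z : EuclideanSpace ℝ (Fin n) × EuclideanSpace ℝ (Fin n) =>
          (‖g (z.1 - z.2)‖₊ : ℝ≥0∞) ^ pr := hgmeas.comp (measurable_fst.sub measurable_snd)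
      exact h1.mul h2
  have hABle : (∫⁻ x, H x ^ pr) ≤ B ^ (1 - pr) * (Af * Ag) := by
    calc (∫⁻ x, H x ^ pr)
        ≤ ∫⁻ x, B ^ (1 - pr) * ∫⁻ y, (‖f y‖₊ : ℝ≥0∞) ^ pr * (‖g (x - y)‖₊ : ℝ≥0∞) ^ pr :=
          lintegral_mono hkey
      _ = B ^ (1 - pr) * ∫⁻ x, ∫⁻ y, (‖f y‖₊ : ℝ≥0∞) ^ pr * (‖g (x - y)‖₊ : ℝ≥0∞) ^ pr :=
          lintegral_const_mul' _ _ (ENNReal.rpow_ne_top_of_nonneg (by linarith) hB_fin)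
      _ = B ^ (1 - pr) * (Af * Ag) := by rw [hswap]
  -- identification of the constant
  have hexp_eq : (n : ℝ) * ((1 / p).toReal - 1) = (n : ℝ) * q := by
    have h1 : (1 / p).toReal = pr⁻¹ := by rw [one_div, ENNReal.toReal_inv]
    rw [h1, hqdef]
    field_simp
  have hB_val : B = ENNReal.ofReal ((2 * R) ^ (n : ℕ)) * volB1 := by
    rw [hBdef, MeasureTheory.Measure.addHaar_closedBall _ _ (by linarith : (0:ℝ) ≤ 2 * R)]
    simp [finrank_euclideanSpace_fin, hvolB1]
  have hBq : B ^ q = (Cv.toNNReal : ℝ≥0∞) *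
      ENNReal.ofReal (R ^ ((n : ℝ) * ((1 / p).toReal - 1))) := by
    rw [ENNReal.coe_toNNReal hCv_fin, hexp_eq, hB_val,
      ENNReal.mul_rpow_of_nonneg _ _ hq0.le,
      ENNReal.ofReal_rpow_of_nonneg (by positivity) hq0.le]
    have hsplit : (((2 * R) ^ (n : ℕ) : ℝ)) ^ q = 2 ^ ((n : ℝ) * q) * R ^ ((n : ℝ) * q) := by
      rw [← Real.rpow_natCast (2 * R) n, ← Real.rpow_mul (by linarith : (0:ℝ) ≤ 2 * R),
        Real.mul_rpow (by norm_num) hR.le]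
    rw [hsplit, ENNReal.ofReal_mul (by positivity), hCvdef]
    ring
  have heLp_f : eLpNorm ⇑f p volume = Af ^ (1 / pr) := by
    rw [MeasureTheory.eLpNorm_eq_lintegral_rpow_enorm_toReal hp0.ne' hp_top]; rfl
  have heLp_g : eLpNorm ⇑g p volume = Ag ^ (1 / pr) := by
    rw [MeasureTheory.eLpNorm_eq_lintegral_rpow_enorm_toReal hp0.ne' hp_top]; rfl
  rw [hLHS, heLp_f, heLp_g]
  calc (∫⁻ x, H x ^ pr) ^ (1 / pr)
      ≤ (B ^ (1 - pr) * (Af * Ag)) ^ (1 / pr) :=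
        ENNReal.rpow_le_rpow hABle (by positivity)
    _ = (B ^ (1 - pr)) ^ (1 / pr) * (Af ^ (1 / pr) * Ag ^ (1 / pr)) := by
        rw [ENNReal.mul_rpow_of_nonneg _ _ (by positivity : (0:ℝ) ≤ 1 / pr),
          ENNReal.mul_rpow_of_nonneg _ _ (by positivity : (0:ℝ) ≤ 1 / pr)]
    _ = B ^ q * (Af ^ (1 / pr) * Ag ^ (1 / pr)) := by
        rw [← ENNReal.rpow_mul]
        congr 2
        rw [hqdef]
        field_simp
    _ = (Cv.toNNReal : ℝ≥0∞) * ENNReal.ofReal (R ^ ((n : ℝ) * ((1 / p).toReal - 1))) *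
          Af ^ (1 / pr) * Ag ^ (1 / pr) := by rw [hBq]; ring


end
end

section
/- Let n be a positive integer, 0 < q₁, q₂ ≤ ∞ and s₁, s₂ ∈ ℝ. Then there exists a constant C > 0 such that ‖a‖_{ℓ^{s₂,0}_{q₂}} ≤ C·‖a‖_{ℓ^{s₁,0}_{q₁}} for every a : ℤ^n → ℂ if and only if either (s₂ ≤ s₁ and 1/q₂ + s₂/n < 1/q₁ + s₁/n) or (s₂ = s₁ and q₂ = q₁), with the convention 1/∞ = 0. -/
open MeasureTheory Real Function
open scoped ENNReal NNReal FourierTransform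

noncomputable section

namespace Aux

variable {ι : Type*}

theorem lqNorm_mono {q : ℝ≥0∞} {w w' : ι → ℝ≥0∞} (h : ∀ i, w i ≤ w' i) :
    lqNorm q w ≤ lqNorm q w' := by
  unfold lqNorm
  split_ifs
  · exact iSup_mono h
  · exact ENNReal.rpow_le_rpow (ENNReal.tsum_le_tsum fun i =>
      ENNReal.rpow_le_rpow (h i) ENNReal.toReal_nonneg) (by positivity)

theorem le_lqNorm_of_finite {q : ℝ≥0∞} (hq : q ≠ 0) (hq' : q ≠ ∞) {w : ι → ℝ≥0∞} (i : ι) :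
    w i ≤ lqNorm q w := by
  have hqt : 0 < q.toReal := ENNReal.toReal_pos hq hq'
  unfold lqNorm
  rw [if_neg hq']
  calc w i = ((w i) ^ q.toReal) ^ (1 / q.toReal) := by
        rw [← ENNReal.rpow_mul, mul_one_div_cancel hqt.ne', ENNReal.rpow_one]
    _ ≤ _ := ENNReal.rpow_le_rpow (ENNReal.le_tsum i) (by positivity)

theorem le_lqNorm {q : ℝ≥0∞} (hq : q ≠ 0) {w : ι → ℝ≥0∞} (i : ι) :
    w i ≤ lqNorm q w := by
  rcases eq_or_ne q ∞ with rfl | hq'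
  · rw [lqNorm, if_pos rfl]; exact le_iSup w i
  · exact le_lqNorm_of_finite hq hq' i

/-- Monotonicity of `ℓ^q` norms: larger exponent, smaller norm. -/
theorem lqNorm_anti {w : ι → ℝ≥0∞} {p q : ℝ≥0∞} (hp : p ≠ 0) (hpq : p ≤ q) :
    lqNorm q w ≤ lqNorm p w := by
  rcases eq_or_ne p ∞ with rfl | hp'
  · rw [top_le_iff.mp hpq]
  have hq : q ≠ 0 := fun h => hp (le_antisymm (h ▸ hpq) zero_le)
  have hpt : 0 < p.toReal := ENNReal.toReal_pos hp hp'
  have hSle : ∀ i, w i ≤ lqNorm p w := fun i => le_lqNorm_of_finite hp hp' i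
  rcases eq_or_ne q ∞ with rfl | hq'
  · rw [lqNorm, if_pos rfl]; exact iSup_le hSle
  have hqt : 0 < q.toReal := ENNReal.toReal_pos hq hq'
  have hptqt : p.toReal ≤ q.toReal := ENNReal.toReal_mono hq' hpq
  set S := lqNorm p w with hS
  by_cases hzero : ∑' i, w i ^ p.toReal = 0
  · have hwz : ∀ i, w i = 0 := by
      intro i
      have := (ENNReal.tsum_eq_zero.mp hzero) i
      simpa [ENNReal.rpow_eq_zero_iff, hpt, hpt.not_gt] using this
    have : lqNorm q w = 0 := by
      rw [lqNorm, if_neg hq']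
      simp [hwz, ENNReal.zero_rpow_of_pos hqt, ENNReal.zero_rpow_of_pos (by positivity : (0:ℝ) < 1/q.toReal), hqt]
    simp [this]
  have hSp : S ^ p.toReal = ∑' i, w i ^ p.toReal := by
    rw [hS, lqNorm, if_neg hp', ← ENNReal.rpow_mul, one_div,
      inv_mul_cancel₀ hpt.ne', ENNReal.rpow_one]
  rcases eq_or_ne S ∞ with hStop | hSne
  · simp [hStop]
  have hS0 : S ≠ 0 := by
    intro h
    rw [h, ENNReal.zero_rpow_of_pos hpt] at hSp
    exact hzero hSp.symm
  have key : ∑' i, w i ^ q.toReal ≤ S ^ q.toReal := by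
    calc ∑' i, w i ^ q.toReal ≤ ∑' i, w i ^ p.toReal * S ^ (q.toReal - p.toReal) := by
          refine ENNReal.tsum_le_tsum fun i => ?_
          rcases eq_or_ne (w i) 0 with h0 | h0
          · rw [h0, ENNReal.zero_rpow_of_pos hqt]; exact zero_le
          have hwtop : w i ≠ ∞ := by
            intro h
            exact hSne (top_le_iff.mp (h ▸ hSle i))
          calc w i ^ q.toReal = w i ^ p.toReal * w i ^ (q.toReal - p.toReal) := by
                rw [← ENNReal.rpow_add _ _ h0 hwtop]; ring_nf
            _ ≤ w i ^ p.toReal * S ^ (q.toReal - p.toReal) :=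
                mul_le_mul_right (ENNReal.rpow_le_rpow (hSle i) (by linarith)) _
    _ = (∑' i, w i ^ p.toReal) * S ^ (q.toReal - p.toReal) := ENNReal.tsum_mul_right
    _ = S ^ p.toReal * S ^ (q.toReal - p.toReal) := by rw [hSp]
    _ = S ^ q.toReal := by rw [← ENNReal.rpow_add _ _ hS0 hSne]; ring_nf
  rw [lqNorm, if_neg hq']
  calc (∑' i, w i ^ q.toReal) ^ (1/q.toReal) ≤ (S ^ q.toReal) ^ (1/q.toReal) :=
        ENNReal.rpow_le_rpow key (by positivity)
    _ = S := by rw [← ENNReal.rpow_mul, mul_one_div_cancel hqt.ne', ENNReal.rpow_one]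

theorem lqNorm_single {q : ℝ≥0∞} (hq : q ≠ 0) [DecidableEq ι] (k : ι) (c : ℝ≥0∞) :
    lqNorm q (fun i => if i = k then c else 0) = c := by
  rcases eq_or_ne q ∞ with rfl | hq'
  · rw [lqNorm, if_pos rfl]
    apply le_antisymm
    · exact iSup_le fun i => by split_ifs <;> simp
    · have := le_iSup (fun i => if i = k then c else 0) k
      simpa using this
  have hqt : 0 < q.toReal := ENNReal.toReal_pos hq hq'
  rw [lqNorm, if_neg hq']
  have : ∀ i, (if i = k then c else 0) ^ q.toReal = if i = k then c ^ q.toReal else 0 := by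
    intro i; split_ifs <;> simp [ENNReal.zero_rpow_of_pos hqt]
  rw [tsum_congr this, tsum_ite_eq k (fun _ => c ^ q.toReal), ← ENNReal.rpow_mul,
    mul_one_div_cancel hqt.ne', ENNReal.rpow_one]

theorem one_div_toReal {q : ℝ≥0∞} : (1 / q).toReal = 1 / q.toReal := by
  rw [one_div, one_div, ENNReal.toReal_inv]

theorem lqNorm_le_card {q : ℝ≥0∞} (hq : q ≠ 0) (S : Finset ι) {w : ι → ℝ≥0∞} {c : ℝ≥0∞}
    (h0 : ∀ i ∉ S, w i = 0) (hle : ∀ i ∈ S, w i ≤ c) :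
    lqNorm q w ≤ c * (S.card : ℝ≥0∞) ^ (1 / q).toReal := by
  rcases eq_or_ne q ∞ with rfl | hq'
  · simp only [lqNorm, if_pos rfl]
    have : (1 / (∞:ℝ≥0∞)).toReal = 0 := by simp
    rw [this, ENNReal.rpow_zero, mul_one]
    refine iSup_le fun i => ?_
    by_cases h : i ∈ S
    · exact hle i h
    · rw [h0 i h]; exact zero_le
  have hqt : 0 < q.toReal := ENNReal.toReal_pos hq hq'
  rw [lqNorm, if_neg hq', one_div_toReal]
  have hsum : ∑' i, w i ^ q.toReal = ∑ i ∈ S, w i ^ q.toReal := by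
    refine tsum_eq_sum fun i hi => ?_
    rw [h0 i hi, ENNReal.zero_rpow_of_pos hqt]
  rw [hsum]
  calc (∑ i ∈ S, w i ^ q.toReal) ^ (1/q.toReal)
      ≤ (∑ _i ∈ S, c ^ q.toReal) ^ (1/q.toReal) := by
        refine ENNReal.rpow_le_rpow (Finset.sum_le_sum fun i hi => ?_) (by positivity)
        exact ENNReal.rpow_le_rpow (hle i hi) hqt.le
    _ = ((S.card : ℝ≥0∞) * c ^ q.toReal) ^ (1/q.toReal) := by
        rw [Finset.sum_const, nsmul_eq_mul]
    _ = c * (S.card : ℝ≥0∞) ^ (1/q.toReal) := by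
        rw [ENNReal.mul_rpow_of_nonneg _ _ (by positivity), ← ENNReal.rpow_mul,
          mul_one_div_cancel hqt.ne', ENNReal.rpow_one, mul_comm]

theorem card_le_lqNorm {q : ℝ≥0∞} (hq : q ≠ 0) (S : Finset ι) (hS : S.Nonempty)
    {w : ι → ℝ≥0∞} {c : ℝ≥0∞} (hge : ∀ i ∈ S, c ≤ w i) :
    c * (S.card : ℝ≥0∞) ^ (1 / q).toReal ≤ lqNorm q w := by
  rcases eq_or_ne q ∞ with rfl | hq'
  · simp only [lqNorm, if_pos rfl]
    have h1 : (1 / (∞:ℝ≥0∞)).toReal = 0 := by simp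
    rw [h1, ENNReal.rpow_zero, mul_one]
    obtain ⟨i, hi⟩ := hS
    exact (hge i hi).trans (le_iSup w i)
  have hqt : 0 < q.toReal := ENNReal.toReal_pos hq hq'
  rw [lqNorm, if_neg hq', one_div_toReal]
  have hsum : (S.card : ℝ≥0∞) * c ^ q.toReal ≤ ∑' i, w i ^ q.toReal := by
    calc (S.card : ℝ≥0∞) * c ^ q.toReal = ∑ _i ∈ S, c ^ q.toReal := by
          rw [Finset.sum_const, nsmul_eq_mul]
      _ ≤ ∑ i ∈ S, w i ^ q.toReal :=
          Finset.sum_le_sum fun i hi => ENNReal.rpow_le_rpow (hge i hi) hqt.le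
      _ ≤ ∑' i, w i ^ q.toReal := ENNReal.sum_le_tsum S
  calc c * (S.card : ℝ≥0∞) ^ (1/q.toReal)
      = ((S.card : ℝ≥0∞) * c ^ q.toReal) ^ (1/q.toReal) := by
        rw [ENNReal.mul_rpow_of_nonneg _ _ (by positivity), ← ENNReal.rpow_mul,
          mul_one_div_cancel hqt.ne', ENNReal.rpow_one, mul_comm]
    _ ≤ _ := ENNReal.rpow_le_rpow hsum (by positivity)

/-- Hölder's inequality for `ℝ≥0∞`-valued families. -/
theorem tsum_mul_le_Lp_mul_Lq {p p' : ℝ} (h : p.HolderConjugate p') (f g : ι → ℝ≥0∞) :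
    ∑' i, f i * g i ≤ (∑' i, f i ^ p) ^ (1 / p) * (∑' i, g i ^ p') ^ (1 / p') := by
  letI : MeasurableSpace ι := ⊤
  haveI : MeasurableSingletonClass ι := ⟨fun _ => trivial⟩
  have hm : ∀ h : ι → ℝ≥0∞, Measurable h := fun h s _ => trivial
  have := ENNReal.lintegral_mul_le_Lp_mul_Lq (μ := Measure.count) h
    (hm f).aemeasurable (hm g).aemeasurable
  simpa [lintegral_count] using this

/-- If `A m^u ≤ B m^v` for all `m ≥ 1` then `u ≤ v`. -/
theorem exponent_le {u v A B : ℝ} (hA : 0 < A) (_hB : 0 < B)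
    (h : ∀ m : ℕ, 1 ≤ m → A * (m : ℝ) ^ u ≤ B * (m : ℝ) ^ v) : u ≤ v := by
  by_contra hlt
  push_neg at hlt
  have hε : 0 < u - v := by linarith
  have htend : Filter.Tendsto (fun m : ℕ => (m : ℝ) ^ (u - v)) Filter.atTop Filter.atTop :=
    (tendsto_rpow_atTop hε).comp tendsto_natCast_atTop_atTop
  have hub : ∀ m : ℕ, 1 ≤ m → (m : ℝ) ^ (u - v) ≤ B / A := by
    intro m hm
    have hm1 : (1:ℝ) ≤ (m:ℝ) := by exact_mod_cast hm
    have hmp : (0:ℝ) < (m:ℝ) := by linarith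
    have := h m hm
    rw [Real.rpow_sub hmp, div_le_div_iff₀ (by positivity) hA]
    calc (m:ℝ) ^ u * A = A * (m:ℝ)^u := by ring
      _ ≤ B * (m:ℝ)^v := this
      _ = B * (m:ℝ)^v := rfl
  obtain ⟨m, hm⟩ := (htend.eventually_gt_atTop (B / A)).and
    (Filter.eventually_ge_atTop 1) |>.exists
  exact absurd (hub m hm.2) (not_le.mpr hm.1)

end Aux

namespace Aux

theorem norm_intVec_sq {n : ℕ} (k : Fin n → ℤ) :
    ‖intVec k‖ ^ 2 = ∑ i, ((k i : ℝ)) ^ 2 := by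
  rw [EuclideanSpace.norm_eq, Real.sq_sqrt (by positivity)]
  exact Finset.sum_congr rfl fun i _ => by
    rw [Real.norm_eq_abs, sq_abs]; rfl

theorem jap_pos {n : ℕ} (k : Fin n → ℤ) : 0 < jap k :=
  Real.rpow_pos_of_pos (by positivity) _

theorem one_le_jap {n : ℕ} (k : Fin n → ℤ) : 1 ≤ jap k :=
  Real.one_le_rpow (by nlinarith [sq_nonneg ‖intVec k‖]) (by norm_num)

/-- The dyadic cube `{k : ℤ^n | ∀ i, m ≤ k i < 2m}`. -/
def cube (n m : ℕ) : Finset (Fin n → ℤ) :=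
  Fintype.piFinset fun _ => Finset.Ico (m : ℤ) (2 * m)

theorem cube_card (n m : ℕ) : (cube n m).card = m ^ n := by
  rw [cube, Fintype.card_piFinset_const, Int.card_Ico]
  congr 1
  omega

theorem cube_nonempty {n m : ℕ} (hm : 1 ≤ m) : (cube n m).Nonempty := by
  rw [cube, Fintype.piFinset_nonempty]
  intro _
  refine ⟨(m : ℤ), Finset.mem_Ico.mpr ⟨le_refl _, ?_⟩⟩
  omega

theorem jap_cube_bounds {n m : ℕ} (hn : 0 < n) (hm : 1 ≤ m) {k : Fin n → ℤ}
    (hk : k ∈ cube n m) : (m : ℝ) ≤ jap k ∧ jap k ≤ 3 * Real.sqrt n * m := by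
  have hki : ∀ i, (m : ℤ) ≤ k i ∧ k i < 2 * m := by
    intro i
    have := Fintype.mem_piFinset.mp hk i
    exact Finset.mem_Ico.mp this
  have hmR : (1 : ℝ) ≤ (m : ℝ) := by exact_mod_cast hm
  have hsq : ∀ i, (m : ℝ) ^ 2 ≤ ((k i : ℝ)) ^ 2 ∧ ((k i : ℝ)) ^ 2 ≤ (2 * m : ℝ) ^ 2 := by
    intro i
    have h1 : (m : ℝ) ≤ (k i : ℝ) := by exact_mod_cast (hki i).1
    have h2 : (k i : ℝ) ≤ 2 * m := by
      have : k i ≤ 2 * m := by have := (hki i).2; omega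
      exact_mod_cast this
    constructor <;> nlinarith
  have hsum_lb : (n : ℝ) * (m : ℝ) ^ 2 ≤ ∑ i, ((k i : ℝ)) ^ 2 := by
    calc (n : ℝ) * (m : ℝ) ^ 2 = ∑ _i : Fin n, (m : ℝ) ^ 2 := by
          rw [Finset.sum_const, Finset.card_univ, Fintype.card_fin, nsmul_eq_mul]
      _ ≤ _ := Finset.sum_le_sum fun i _ => (hsq i).1
  have hsum_ub : ∑ i, ((k i : ℝ)) ^ 2 ≤ (n : ℝ) * (4 * (m : ℝ) ^ 2) := by
    calc ∑ i, ((k i : ℝ)) ^ 2 ≤ ∑ _i : Fin n, (2 * (m : ℝ)) ^ 2 :=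
          Finset.sum_le_sum fun i _ => (hsq i).2
      _ = (n : ℝ) * (4 * (m : ℝ) ^ 2) := by
          rw [Finset.sum_const, Finset.card_univ, Fintype.card_fin, nsmul_eq_mul]; ring
  have hnR : (1 : ℝ) ≤ (n : ℝ) := by exact_mod_cast hn
  constructor
  · have : (m : ℝ) ^ 2 ≤ 1 + ‖intVec k‖ ^ 2 := by
      rw [norm_intVec_sq]; nlinarith
    calc (m : ℝ) = ((m : ℝ) ^ 2) ^ ((1 : ℝ) / 2) := by
          rw [← Real.sqrt_eq_rpow, Real.sqrt_sq (by positivity)]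
      _ ≤ jap k := Real.rpow_le_rpow (by positivity) this (by norm_num)
  · have h9 : 1 + ‖intVec k‖ ^ 2 ≤ 9 * (n : ℝ) * (m : ℝ) ^ 2 := by
      rw [norm_intVec_sq]; nlinarith
    calc jap k ≤ (9 * (n : ℝ) * (m : ℝ) ^ 2) ^ ((1 : ℝ) / 2) :=
          Real.rpow_le_rpow (by positivity) h9 (by norm_num)
      _ = 3 * Real.sqrt n * m := by
          rw [← Real.sqrt_eq_rpow]
          rw [show 9 * (n : ℝ) * (m : ℝ) ^ 2 = (3 * Real.sqrt n * m) ^ 2 by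
            have : Real.sqrt n ^ 2 = (n : ℝ) := Real.sq_sqrt (by positivity)
            nlinarith]
          exact Real.sqrt_sq (by positivity)

theorem rpow_sandwich {c x m : ℝ} (s : ℝ) (hc : 1 ≤ c) (hm : 0 < m)
    (h1 : m ≤ x) (h2 : x ≤ c * m) :
    min 1 (c ^ s) * m ^ s ≤ x ^ s ∧ x ^ s ≤ max 1 (c ^ s) * m ^ s := by
  have hx : 0 < x := hm.trans_le h1
  rcases le_or_gt 0 s with hs | hs
  · constructor
    · calc min 1 (c ^ s) * m ^ s ≤ 1 * m ^ s := by
            gcongr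
            exact min_le_left _ _
        _ = m ^ s := one_mul _
        _ ≤ x ^ s := Real.rpow_le_rpow hm.le h1 hs
    · calc x ^ s ≤ (c * m) ^ s := Real.rpow_le_rpow hx.le h2 hs
        _ = c ^ s * m ^ s := Real.mul_rpow (by linarith) hm.le
        _ ≤ max 1 (c ^ s) * m ^ s := by
            gcongr
            exact le_max_right _ _
  · constructor
    · calc min 1 (c ^ s) * m ^ s ≤ c ^ s * m ^ s := by
            gcongr
            exact min_le_right _ _
        _ = (c * m) ^ s := (Real.mul_rpow (by linarith) hm.le).symm
        _ ≤ x ^ s := Real.rpow_le_rpow_of_nonpos hx h2 hs.le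
    · calc x ^ s ≤ m ^ s := Real.rpow_le_rpow_of_nonpos hm h1 hs.le
        _ ≤ max 1 (c ^ s) * m ^ s := by
            nth_rewrite 1 [← one_mul (m ^ s)]
            gcongr
            exact le_max_left _ _

theorem one_add_abs_le_two_jap {n : ℕ} (k : Fin n → ℤ) (i : Fin n) :
    1 + |(k i : ℝ)| ≤ 2 * jap k := by
  set a : ℝ := (k i : ℝ)
  have h1 : Real.sqrt (1 + a ^ 2) ≤ jap k := by
    rw [Real.sqrt_eq_rpow]
    apply Real.rpow_le_rpow (by positivity) _ (by norm_num)
    have : a ^ 2 ≤ ‖intVec k‖ ^ 2 := by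
      rw [norm_intVec_sq]
      exact Finset.single_le_sum (f := fun j => ((k j : ℝ)) ^ 2)
        (fun j _ => by positivity) (Finset.mem_univ i)
    linarith
  have h2 : 1 + |a| ≤ 2 * Real.sqrt (1 + a ^ 2) := by
    have habs : |a| ^ 2 = a ^ 2 := sq_abs a
    have : (1 + |a|) / 2 ≤ Real.sqrt (1 + a ^ 2) := by
      rw [Real.le_sqrt (by positivity) (by positivity)]
      nlinarith [abs_nonneg a, sq_nonneg (|a| - 1)]
    linarith
  linarith

theorem prod_one_add_abs_le {n : ℕ} (k : Fin n → ℤ) :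
    ∏ i, (1 + |(k i : ℝ)|) ≤ (2 * jap k) ^ n := by
  calc ∏ i, (1 + |(k i : ℝ)|) ≤ ∏ _i : Fin n, (2 * jap k) :=
        Finset.prod_le_prod (fun i _ => by positivity) fun i _ => one_add_abs_le_two_jap k i
    _ = (2 * jap k) ^ n := by
        rw [Finset.prod_const, Finset.card_univ, Fintype.card_fin]

theorem jap_rpow_le_prod {n : ℕ} (hn : 0 < n) {t : ℝ} (ht : t < 0) (k : Fin n → ℤ) :
    jap k ^ t ≤ 2 ^ (-t) * ∏ i, (1 + |(k i : ℝ)|) ^ (t / n) := by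
  have hnR : (0 : ℝ) < (n : ℝ) := by exact_mod_cast hn
  have hP : (0 : ℝ) < ∏ i, (1 + |(k i : ℝ)|) :=
    Finset.prod_pos fun i _ => by positivity
  have hj : (0 : ℝ) < 2 * jap k := by have := jap_pos k; linarith
  have hstep : (2 * jap k) ^ t ≤ (∏ i, (1 + |(k i : ℝ)|)) ^ (t / n) := by
    have h := prod_one_add_abs_le k
    have hz : t / (n : ℝ) ≤ 0 := by
      rw [div_nonpos_iff]
      first
      | exact Or.inl ⟨ht.le, hnR.le⟩
      | exact Or.inr ⟨ht.le, hnR.le⟩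
    have key := Real.rpow_le_rpow_of_nonpos hP h hz
    calc (2 * jap k) ^ t = ((2 * jap k) ^ (n : ℝ)) ^ (t / n) := by
          rw [← Real.rpow_mul hj.le]
          congr 1
          field_simp
      _ = ((2 * jap k) ^ n) ^ (t / n) := by rw [Real.rpow_natCast]
      _ ≤ (∏ i, (1 + |(k i : ℝ)|)) ^ (t / n) := key
  have hsplit : jap k ^ t = 2 ^ (-t) * (2 * jap k) ^ t := by
    rw [Real.mul_rpow (by norm_num) (jap_pos k).le, ← mul_assoc,
      ← Real.rpow_add (by norm_num : (0:ℝ) < 2)]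
    norm_num
  rw [hsplit, Real.finset_prod_rpow _ _ (fun i _ => by positivity) _]
  exact mul_le_mul_of_nonneg_left hstep (Real.rpow_nonneg (by norm_num) _)

end Aux

namespace Aux2

theorem G_summable {u : ℝ} (hu : u < -1) :
    Summable fun m : ℤ => (1 + |(m : ℝ)|) ^ u := by
  have hnat : Summable fun a : ℕ => (1 + (a : ℝ)) ^ u := by
    have h0 : Summable fun a : ℕ => ((a : ℝ)) ^ u := Real.summable_nat_rpow.mpr hu
    have := (summable_nat_add_iff 1).mpr h0
    refine this.congr fun a => ?_
    push_cast
    rw [add_comm]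
  apply Summable.of_nat_of_neg
  · refine hnat.congr fun a => ?_
    rw [Int.cast_natCast, abs_of_nonneg (by positivity : (0:ℝ) ≤ (a:ℝ))]
  · refine hnat.congr fun a => ?_
    rw [Int.cast_neg, abs_neg, Int.cast_natCast,
      abs_of_nonneg (by positivity : (0:ℝ) ≤ (a:ℝ))]

theorem tsum_pi_prod (G : ℤ → ℝ≥0∞) :
    ∀ N : ℕ, ∑' k : Fin N → ℤ, ∏ i, G (k i) = (∑' m : ℤ, G m) ^ N := by
  intro N
  induction N with
  | zero =>
    rw [pow_zero]
    rw [tsum_eq_single (fun i => (0 : ℤ)) (fun b hb => absurd (Subsingleton.elim b _) hb)]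
    simp
  | succ N ih =>
    have he := (Fin.consEquiv (fun _ : Fin (N + 1) => ℤ)).tsum_eq
      (fun k : Fin (N + 1) → ℤ => ∏ i, G (k i))
    rw [← he]
    have : ∀ p : ℤ × (Fin N → ℤ),
        (∏ i, G ((Fin.consEquiv (fun _ : Fin (N + 1) => ℤ)) p i)) =
          G p.1 * ∏ i : Fin N, G (p.2 i) := by
      intro p
      rw [Fin.prod_univ_succ]
      congr 1
    calc ∑' p : ℤ × (Fin N → ℤ), ∏ i, G ((Fin.consEquiv (fun _ : Fin (N+1) => ℤ)) p i)
        = ∑' p : ℤ × (Fin N → ℤ), G p.1 * ∏ i : Fin N, G (p.2 i) := tsum_congr this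
      _ = ∑' a : ℤ, ∑' b : Fin N → ℤ, G a * ∏ i : Fin N, G (b i) := ENNReal.tsum_prod'
      _ = ∑' a : ℤ, G a * ∑' b : Fin N → ℤ, ∏ i : Fin N, G (b i) := by
          exact tsum_congr fun a => ENNReal.tsum_mul_left
      _ = (∑' a : ℤ, G a) * ((∑' m : ℤ, G m) ^ N) := by rw [ih, ENNReal.tsum_mul_right]
      _ = (∑' m : ℤ, G m) ^ (N + 1) := by rw [pow_succ]; ring

theorem japSummable {n : ℕ} (hn : 0 < n) {t : ℝ} (ht : t < -(n : ℝ)) :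
    ∑' k : Fin n → ℤ, ENNReal.ofReal (jap k ^ t) ≠ ∞ := by
  have hnR : (0 : ℝ) < (n : ℝ) := by exact_mod_cast hn
  have hu : t / n < -1 := by
    rw [div_lt_iff₀ hnR]
    linarith
  have ht0 : t < 0 := by nlinarith
  set G : ℤ → ℝ≥0∞ := fun m => ENNReal.ofReal ((1 + |(m : ℝ)|) ^ (t / n)) with hG
  have hbound : ∀ k : Fin n → ℤ,
      ENNReal.ofReal (jap k ^ t) ≤ ENNReal.ofReal (2 ^ (-t)) * ∏ i, G (k i) := by
    intro k
    have h1 := Aux.jap_rpow_le_prod hn ht0 k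
    calc ENNReal.ofReal (jap k ^ t)
        ≤ ENNReal.ofReal (2 ^ (-t) * ∏ i, (1 + |(k i : ℝ)|) ^ (t / n)) :=
          ENNReal.ofReal_le_ofReal h1
      _ = ENNReal.ofReal (2 ^ (-t)) * ENNReal.ofReal (∏ i, (1 + |(k i : ℝ)|) ^ (t / n)) := by
          rw [ENNReal.ofReal_mul (by positivity)]
      _ = ENNReal.ofReal (2 ^ (-t)) * ∏ i, G (k i) := by
          rw [ENNReal.ofReal_prod_of_nonneg fun i _ => by positivity]
  have hT : ∑' m : ℤ, G m ≠ ∞ := by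
    rw [hG, ← ENNReal.ofReal_tsum_of_nonneg (fun m => by positivity) (G_summable hu)]
    exact ENNReal.ofReal_ne_top
  refine LT.lt.ne ?_
  calc ∑' k : Fin n → ℤ, ENNReal.ofReal (jap k ^ t)
      ≤ ∑' k : Fin n → ℤ, ENNReal.ofReal (2 ^ (-t)) * ∏ i, G (k i) :=
        ENNReal.tsum_le_tsum hbound
    _ = ENNReal.ofReal (2 ^ (-t)) * (∑' m : ℤ, G m) ^ n := by
        rw [ENNReal.tsum_mul_left, tsum_pi_prod]
    _ < ∞ := by
        apply ENNReal.mul_lt_top ENNReal.ofReal_lt_top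
        exact ENNReal.pow_lt_top (lt_of_le_of_ne le_top hT)

end Aux2

namespace Emb


def jmin (n : ℕ) (s : ℝ) : ℝ := min 1 ((3 * Real.sqrt n) ^ s)
def jmax (n : ℕ) (s : ℝ) : ℝ := max 1 ((3 * Real.sqrt n) ^ s)

theorem sqrt3_pos {n : ℕ} (hn : 0 < n) : (0:ℝ) < 3 * Real.sqrt n := by
  have : (0:ℝ) < (n:ℝ) := by exact_mod_cast hn
  have := Real.sqrt_pos.mpr this
  linarith

theorem one_le_sqrt3 {n : ℕ} (hn : 0 < n) : (1:ℝ) ≤ 3 * Real.sqrt n := by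
  have h1 : (1:ℝ) ≤ (n:ℝ) := by exact_mod_cast hn
  have h := Real.sqrt_le_sqrt h1
  rw [Real.sqrt_one] at h
  nlinarith [Real.sqrt_nonneg (n:ℝ)]

theorem jmin_pos {n : ℕ} (hn : 0 < n) (s : ℝ) : 0 < jmin n s :=
  lt_min one_pos (Real.rpow_pos_of_pos (sqrt3_pos hn) s)

theorem jmax_pos {n : ℕ} (s : ℝ) : 0 < jmax n s :=
  lt_of_lt_of_le one_pos (le_max_left _ _)

theorem mpos {m : ℕ} (hm : 1 ≤ m) : (0:ℝ) < (m:ℝ) := by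
  have : 0 < m := hm
  exact_mod_cast this

theorem jap_rpow_cube_bounds {n : ℕ} (hn : 0 < n) {m : ℕ} (hm : 1 ≤ m) (s : ℝ)
    {k : Fin n → ℤ} (hk : k ∈ Aux.cube n m) :
    jmin n s * (m:ℝ) ^ s ≤ jap k ^ s ∧ jap k ^ s ≤ jmax n s * (m:ℝ) ^ s := by
  obtain ⟨h1, h2⟩ := Aux.jap_cube_bounds hn hm hk
  exact Aux.rpow_sandwich s (one_le_sqrt3 hn) (mpos hm) h1 h2

theorem cube_card_rpow {n m : ℕ} (hm : 1 ≤ m) (α : ℝ) :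
    ((Aux.cube n m).card : ℝ≥0∞) ^ α = ENNReal.ofReal ((m:ℝ) ^ ((n:ℝ) * α)) := by
  have hm0 := mpos hm
  rw [Aux.cube_card]
  have h1 : ((m ^ n : ℕ) : ℝ≥0∞) = ENNReal.ofReal ((m:ℝ) ^ ((n:ℕ):ℝ)) := by
    rw [Real.rpow_natCast, ← Nat.cast_pow, ENNReal.ofReal_natCast]
  rw [h1, ENNReal.ofReal_rpow_of_pos (by positivity), ← Real.rpow_mul hm0.le]

theorem cube_card_ennreal {n m : ℕ} (hm : 1 ≤ m) :
    ((Aux.cube n m).card : ℝ≥0∞) = ENNReal.ofReal ((m:ℝ) ^ ((n:ℝ))) := by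
  have := cube_card_rpow (n := n) hm 1
  rw [ENNReal.rpow_one, mul_one] at this
  exact this

theorem lqNormZ_delta {n : ℕ} {q : ℝ≥0∞} (hq : q ≠ 0) (s : ℝ) (k₀ : Fin n → ℤ) :
    lqNormZ q s (fun k => if k = k₀ then 1 else 0) = ENNReal.ofReal (jap k₀ ^ s) := by
  rw [lqNormZ]
  have heq : (fun k => ENNReal.ofReal (jap k ^ s) *
      (‖(if k = k₀ then (1:ℂ) else 0)‖₊ : ℝ≥0∞)) =
      fun k => if k = k₀ then ENNReal.ofReal (jap k₀ ^ s) else 0 := by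
    funext k
    split_ifs with h
    · subst h; simp
    · simp
  rw [heq, Aux.lqNorm_single hq]

theorem lqNormZ_cube_le {n : ℕ} {q : ℝ≥0∞} (hq : q ≠ 0) (hn : 0 < n) (s : ℝ) {m : ℕ}
    (hm : 1 ≤ m) :
    lqNormZ q s (fun k => if k ∈ Aux.cube n m then (1:ℂ) else 0) ≤
      ENNReal.ofReal (jmax n s * (m:ℝ) ^ (s + (n:ℝ) * (1/q).toReal)) := by
  have hm0 := mpos hm
  rw [lqNormZ]
  refine le_trans (Aux.lqNorm_le_card hq (Aux.cube n m)
      (c := ENNReal.ofReal (jmax n s * (m:ℝ) ^ s)) ?_ ?_) ?_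
  · intro k hk; simp [hk]
  · intro k hk
    rw [if_pos hk]
    simp only [nnnorm_one, ENNReal.coe_one, mul_one]
    exact ENNReal.ofReal_le_ofReal (jap_rpow_cube_bounds hn hm s hk).2
  · rw [cube_card_rpow hm, ← ENNReal.ofReal_mul
      (le_of_lt (mul_pos (jmax_pos s) (Real.rpow_pos_of_pos hm0 s)))]
    apply ENNReal.ofReal_le_ofReal
    rw [mul_assoc, ← Real.rpow_add hm0]

theorem lqNormZ_cube_ge {n : ℕ} {q : ℝ≥0∞} (hq : q ≠ 0) (hn : 0 < n) (s : ℝ) {m : ℕ}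
    (hm : 1 ≤ m) :
    ENNReal.ofReal (jmin n s * (m:ℝ) ^ (s + (n:ℝ) * (1/q).toReal)) ≤
      lqNormZ q s (fun k => if k ∈ Aux.cube n m then (1:ℂ) else 0) := by
  have hm0 := mpos hm
  rw [lqNormZ]
  refine le_trans ?_ (Aux.card_le_lqNorm hq (Aux.cube n m) (Aux.cube_nonempty hm)
      (c := ENNReal.ofReal (jmin n s * (m:ℝ) ^ s)) ?_)
  · rw [cube_card_rpow hm, ← ENNReal.ofReal_mul
      (le_of_lt (mul_pos (jmin_pos hn s) (Real.rpow_pos_of_pos hm0 s)))]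
    apply ENNReal.ofReal_le_ofReal
    rw [mul_assoc, ← Real.rpow_add hm0]
  · intro k hk
    rw [if_pos hk]
    simp only [nnnorm_one, ENNReal.coe_one, mul_one]
    exact ENNReal.ofReal_le_ofReal (jap_rpow_cube_bounds hn hm s hk).1

theorem const_mem_cube {n m : ℕ} (hm : 1 ≤ m) :
    (fun _ : Fin n => (m:ℤ)) ∈ Aux.cube n m := by
  rw [Aux.cube, Fintype.mem_piFinset]
  intro i
  rw [Finset.mem_Ico]
  constructor
  · rfl
  · omega

theorem eq_of_mem_cube_pow {n : ℕ} (hn : 0 < n) {i j : ℕ} {k : Fin n → ℤ}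
    (hi : k ∈ Aux.cube n (2 ^ i)) (hj : k ∈ Aux.cube n (2 ^ j)) : i = j := by
  by_contra hne
  set i0 : Fin n := ⟨0, hn⟩
  have h1 := Finset.mem_Ico.mp (Fintype.mem_piFinset.mp hi i0)
  have h2 := Finset.mem_Ico.mp (Fintype.mem_piFinset.mp hj i0)
  have key : ∀ a b : ℕ, a < b → k i0 < 2 * ((2 ^ a : ℕ) : ℤ) → ((2 ^ b : ℕ) : ℤ) ≤ k i0 → False := by
    intro a b hab hlt hge
    have hle : (2 * 2 ^ a : ℕ) ≤ 2 ^ b := by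
      rw [← pow_succ']
      exact Nat.pow_le_pow_right (by norm_num) hab
    have hle' : ((2 * 2 ^ a : ℕ) : ℤ) ≤ ((2 ^ b : ℕ) : ℤ) := by exact_mod_cast hle
    push_cast at hle' hlt hge
    linarith
  rcases Nat.lt_or_ge i j with h | h
  · exact key i j h h1.2 h2.1
  · exact key j i (lt_of_le_of_ne h fun hh => hne hh.symm) h2.2 h1.1

/-- The layered-cube test sequence. -/
def aJ (n : ℕ) (r : ℝ) (J : ℕ) : (Fin n → ℤ) → ℂ := fun k =>
  ∑ j ∈ Finset.range J, if k ∈ Aux.cube n (2 ^ j) then ((((2 ^ j : ℕ) : ℝ)) ^ (-r) : ℝ) else 0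

theorem cval_pos (j : ℕ) (r : ℝ) : (0:ℝ) < (((2 ^ j : ℕ) : ℝ)) ^ (-r) :=
  Real.rpow_pos_of_pos (by positivity) _

theorem aJ_eq {n : ℕ} (hn : 0 < n) {J j : ℕ} (hj : j < J) {k : Fin n → ℤ}
    (hk : k ∈ Aux.cube n (2 ^ j)) (r : ℝ) :
    aJ n r J k = ((((2 ^ j : ℕ) : ℝ)) ^ (-r) : ℝ) := by
  rw [aJ, Finset.sum_eq_single_of_mem j (Finset.mem_range.mpr hj)]
  · rw [if_pos hk]
  · intro b _ hbj
    rw [if_neg fun hb => hbj (eq_of_mem_cube_pow hn hb hk)]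

theorem aJ_zero {n : ℕ} {J : ℕ} {k : Fin n → ℤ}
    (hk : ∀ j < J, k ∉ Aux.cube n (2 ^ j)) (r : ℝ) : aJ n r J k = 0 := by
  rw [aJ]
  exact Finset.sum_eq_zero fun j hj => if_neg (hk j (Finset.mem_range.mp hj))

theorem card_mul_term {n m : ℕ} (hm : 1 ≤ m) {c qt α : ℝ} (hc : 0 < c) (hqt : 0 < qt)
    (hαqt : α * qt = 1) :
    ((Aux.cube n m).card : ℝ≥0∞) * (ENNReal.ofReal (c * (m:ℝ) ^ (-((n:ℝ) * α)))) ^ qt =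
      ENNReal.ofReal (c ^ qt) := by
  have hm0 := mpos hm
  rw [ENNReal.ofReal_rpow_of_pos (by positivity), cube_card_ennreal hm,
    ← ENNReal.ofReal_mul (by positivity)]
  congr 1
  rw [Real.mul_rpow hc.le (by positivity), ← Real.rpow_mul hm0.le]
  have hexp : -((n:ℝ) * α) * qt = -(n:ℝ) := by
    calc -((n:ℝ) * α) * qt = -((n:ℝ) * (α * qt)) := by ring
      _ = -(n:ℝ) := by rw [hαqt, mul_one]
  rw [hexp, mul_comm (c ^ qt) _, ← mul_assoc, ← Real.rpow_add hm0]
  rw [add_neg_cancel, Real.rpow_zero, one_mul]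

theorem natCast_rpow_eq_ofReal {J : ℕ} (hJ : 1 ≤ J) (α : ℝ) :
    ((J : ℝ≥0∞)) ^ α = ENNReal.ofReal ((J:ℝ) ^ α) := by
  rw [← ENNReal.ofReal_natCast, ENNReal.ofReal_rpow_of_pos (mpos hJ)]

theorem alpha_mul_toReal {q : ℝ≥0∞} (hq : q ≠ 0) (hq' : q ≠ ∞) :
    (1/q).toReal * q.toReal = 1 := by
  rw [Aux.one_div_toReal, one_div,
    inv_mul_cancel₀ (ENNReal.toReal_pos hq hq').ne']

theorem nnnorm_real_coe {v : ℝ} (hv : 0 ≤ v) :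
    ((‖((v : ℝ) : ℂ)‖₊ : ℝ≥0∞)) = ENNReal.ofReal v := by
  rw [show ((‖((v : ℝ) : ℂ)‖₊ : ℝ≥0∞)) = ENNReal.ofReal ‖((v : ℝ) : ℂ)‖ from
    (ofReal_norm_eq_enorm _).symm, Complex.norm_real, Real.norm_eq_abs, abs_of_nonneg hv]


theorem aJ_W_le {n : ℕ} (hn : 0 < n) {J j : ℕ} (hj : j < J) {k : Fin n → ℤ}
    (hk : k ∈ Aux.cube n (2 ^ j)) (s r : ℝ)
    (hsr : s - r = -((n:ℝ) * α)) :
    ENNReal.ofReal (jap k ^ s) * (‖aJ n r J k‖₊ : ℝ≥0∞) ≤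
      ENNReal.ofReal (jmax n s * ((2 ^ j : ℕ) : ℝ) ^ (-((n:ℝ) * α))) := by
  have hm : 1 ≤ 2 ^ j := Nat.one_le_two_pow
  have hm0 := mpos hm
  rw [aJ_eq hn hj hk, nnnorm_real_coe (cval_pos j r).le,
    ← ENNReal.ofReal_mul (Real.rpow_nonneg (Aux.jap_pos k).le s)]
  apply ENNReal.ofReal_le_ofReal
  calc jap k ^ s * ((2 ^ j : ℕ) : ℝ) ^ (-r)
      ≤ jmax n s * ((2 ^ j : ℕ) : ℝ) ^ s * ((2 ^ j : ℕ) : ℝ) ^ (-r) :=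
        mul_le_mul_of_nonneg_right (jap_rpow_cube_bounds hn hm s hk).2
          (cval_pos j r).le
    _ = jmax n s * ((2 ^ j : ℕ) : ℝ) ^ (-((n:ℝ) * α)) := by
        rw [mul_assoc, ← Real.rpow_add hm0]
        rw [show s + -r = -((n:ℝ) * α) by linarith]

theorem aJ_W_ge {n : ℕ} (hn : 0 < n) {J j : ℕ} (hj : j < J) {k : Fin n → ℤ}
    (hk : k ∈ Aux.cube n (2 ^ j)) (s r : ℝ)
    (hsr : s - r = -((n:ℝ) * α)) :
    ENNReal.ofReal (jmin n s * ((2 ^ j : ℕ) : ℝ) ^ (-((n:ℝ) * α))) ≤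
      ENNReal.ofReal (jap k ^ s) * (‖aJ n r J k‖₊ : ℝ≥0∞) := by
  have hm : 1 ≤ 2 ^ j := Nat.one_le_two_pow
  have hm0 := mpos hm
  rw [aJ_eq hn hj hk, nnnorm_real_coe (cval_pos j r).le,
    ← ENNReal.ofReal_mul (Real.rpow_nonneg (Aux.jap_pos k).le s)]
  apply ENNReal.ofReal_le_ofReal
  calc jmin n s * ((2 ^ j : ℕ) : ℝ) ^ (-((n:ℝ) * α))
      = jmin n s * ((2 ^ j : ℕ) : ℝ) ^ s * ((2 ^ j : ℕ) : ℝ) ^ (-r) := by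
        rw [mul_assoc, ← Real.rpow_add hm0]
        rw [show s + -r = -((n:ℝ) * α) by linarith]
    _ ≤ jap k ^ s * ((2 ^ j : ℕ) : ℝ) ^ (-r) :=
        mul_le_mul_of_nonneg_right (jap_rpow_cube_bounds hn hm s hk).1
          (cval_pos j r).le

theorem biUnion_disj {n : ℕ} (hn : 0 < n) (J : ℕ) :
    (↑(Finset.range J) : Set ℕ).PairwiseDisjoint fun j => Aux.cube n (2 ^ j) :=
  fun i _ j _ hij => Finset.disjoint_left.mpr
    fun k hki hkj => hij (eq_of_mem_cube_pow hn hki hkj)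

theorem lqNormZ_aJ_le {n : ℕ} {q : ℝ≥0∞} (hq : q ≠ 0) (hn : 0 < n) (s r : ℝ)
    (hsr : s - r = -((n:ℝ) * (1/q).toReal)) (J : ℕ) :
    lqNormZ q s (aJ n r J) ≤
      ENNReal.ofReal (jmax n s) * (J : ℝ≥0∞) ^ (1/q).toReal := by
  set α := (1/q).toReal with hα
  have hα0 : 0 ≤ α := ENNReal.toReal_nonneg
  rcases eq_or_ne q ∞ with rfl | hq'
  · have hα' : α = 0 := by rw [hα]; simp
    rw [hα', ENNReal.rpow_zero, mul_one, lqNormZ, lqNorm, if_pos rfl]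
    refine iSup_le fun k => ?_
    by_cases hex : ∃ j < J, k ∈ Aux.cube n (2 ^ j)
    · obtain ⟨j, hj, hk⟩ := hex
      refine le_trans (aJ_W_le hn hj hk s r hsr) (le_of_eq ?_)
      rw [hα', mul_zero, neg_zero, Real.rpow_zero, mul_one]
    · push_neg at hex
      rw [aJ_zero hex r]
      simp
  · have hqt : 0 < q.toReal := ENNReal.toReal_pos hq hq'
    have hαqt : α * q.toReal = 1 := alpha_mul_toReal hq hq'
    rw [lqNormZ, lqNorm, if_neg hq']
    set U := (Finset.range J).biUnion (fun j => Aux.cube n (2 ^ j)) with hU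
    have htsum : ∑' k : Fin n → ℤ, (ENNReal.ofReal (jap k ^ s) * (‖aJ n r J k‖₊ : ℝ≥0∞)) ^ q.toReal
        = ∑ k ∈ U, (ENNReal.ofReal (jap k ^ s) * (‖aJ n r J k‖₊ : ℝ≥0∞)) ^ q.toReal := by
      refine tsum_eq_sum fun k hk => ?_
      have hnot : ∀ j < J, k ∉ Aux.cube n (2 ^ j) := by
        intro j hj hmem
        exact hk (Finset.mem_biUnion.mpr ⟨j, Finset.mem_range.mpr hj, hmem⟩)
      rw [aJ_zero hnot r]
      simp [ENNReal.zero_rpow_of_pos hqt]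
    rw [htsum, hU, Finset.sum_biUnion (biUnion_disj hn J)]
    have hblock : ∀ j ∈ Finset.range J,
        ∑ k ∈ Aux.cube n (2 ^ j),
            (ENNReal.ofReal (jap k ^ s) * (‖aJ n r J k‖₊ : ℝ≥0∞)) ^ q.toReal ≤
          ENNReal.ofReal (jmax n s ^ q.toReal) := by
      intro j hj
      have hm : 1 ≤ 2 ^ j := Nat.one_le_two_pow
      calc ∑ k ∈ Aux.cube n (2 ^ j),
              (ENNReal.ofReal (jap k ^ s) * (‖aJ n r J k‖₊ : ℝ≥0∞)) ^ q.toReal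
          ≤ ∑ _k ∈ Aux.cube n (2 ^ j),
              (ENNReal.ofReal (jmax n s * ((2 ^ j : ℕ) : ℝ) ^ (-((n:ℝ) * α)))) ^ q.toReal := by
            refine Finset.sum_le_sum fun k hk => ?_
            exact ENNReal.rpow_le_rpow
              (aJ_W_le hn (Finset.mem_range.mp hj) hk s r hsr) hqt.le
        _ = ((Aux.cube n (2 ^ j)).card : ℝ≥0∞) *
              (ENNReal.ofReal (jmax n s * ((2 ^ j : ℕ) : ℝ) ^ (-((n:ℝ) * α)))) ^ q.toReal := by
            rw [Finset.sum_const, nsmul_eq_mul]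
        _ = ENNReal.ofReal (jmax n s ^ q.toReal) :=
            card_mul_term hm (jmax_pos s) hqt hαqt
    calc (∑ j ∈ Finset.range J, ∑ k ∈ Aux.cube n (2 ^ j),
            (ENNReal.ofReal (jap k ^ s) * (‖aJ n r J k‖₊ : ℝ≥0∞)) ^ q.toReal) ^ (1 / q.toReal)
        ≤ (∑ _j ∈ Finset.range J, ENNReal.ofReal (jmax n s ^ q.toReal)) ^ (1 / q.toReal) :=
          ENNReal.rpow_le_rpow (Finset.sum_le_sum hblock) (by positivity)
      _ = ((J : ℝ≥0∞) * ENNReal.ofReal (jmax n s ^ q.toReal)) ^ (1 / q.toReal) := by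
          rw [Finset.sum_const, Finset.card_range, nsmul_eq_mul]
      _ = (J : ℝ≥0∞) ^ (1 / q.toReal) *
            (ENNReal.ofReal (jmax n s ^ q.toReal)) ^ (1 / q.toReal) :=
          ENNReal.mul_rpow_of_nonneg _ _ (by positivity)
      _ = ENNReal.ofReal (jmax n s) * (J : ℝ≥0∞) ^ α := by
          rw [ENNReal.ofReal_rpow_of_pos (Real.rpow_pos_of_pos (jmax_pos s) _),
            ← Real.rpow_mul (jmax_pos (n := n) s).le,
            mul_one_div_cancel hqt.ne', Real.rpow_one, hα, Aux.one_div_toReal]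
          exact mul_comm _ _

theorem lqNormZ_aJ_ge {n : ℕ} {q : ℝ≥0∞} (hq : q ≠ 0) (hq' : q ≠ ∞) (hn : 0 < n) (s r : ℝ)
    (hsr : s - r = -((n:ℝ) * (1/q).toReal)) (J : ℕ) :
    ENNReal.ofReal (jmin n s) * (J : ℝ≥0∞) ^ (1/q).toReal ≤ lqNormZ q s (aJ n r J) := by
  set α := (1/q).toReal with hα
  have hqt : 0 < q.toReal := ENNReal.toReal_pos hq hq'
  have hαqt : α * q.toReal = 1 := alpha_mul_toReal hq hq'
  rw [lqNormZ, lqNorm, if_neg hq']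
  set U := (Finset.range J).biUnion (fun j => Aux.cube n (2 ^ j)) with hU
  have hblock : ∀ j ∈ Finset.range J,
      ENNReal.ofReal (jmin n s ^ q.toReal) ≤
        ∑ k ∈ Aux.cube n (2 ^ j),
          (ENNReal.ofReal (jap k ^ s) * (‖aJ n r J k‖₊ : ℝ≥0∞)) ^ q.toReal := by
    intro j hj
    have hm : 1 ≤ 2 ^ j := Nat.one_le_two_pow
    calc ENNReal.ofReal (jmin n s ^ q.toReal)
        = ((Aux.cube n (2 ^ j)).card : ℝ≥0∞) *
            (ENNReal.ofReal (jmin n s * ((2 ^ j : ℕ) : ℝ) ^ (-((n:ℝ) * α)))) ^ q.toReal :=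
          (card_mul_term hm (jmin_pos hn s) hqt hαqt).symm
      _ = ∑ _k ∈ Aux.cube n (2 ^ j),
            (ENNReal.ofReal (jmin n s * ((2 ^ j : ℕ) : ℝ) ^ (-((n:ℝ) * α)))) ^ q.toReal := by
          rw [Finset.sum_const, nsmul_eq_mul]
      _ ≤ ∑ k ∈ Aux.cube n (2 ^ j),
            (ENNReal.ofReal (jap k ^ s) * (‖aJ n r J k‖₊ : ℝ≥0∞)) ^ q.toReal := by
          refine Finset.sum_le_sum fun k hk => ?_
          exact ENNReal.rpow_le_rpow
            (aJ_W_ge hn (Finset.mem_range.mp hj) hk s r hsr) hqt.le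
  have hsum : (J : ℝ≥0∞) * ENNReal.ofReal (jmin n s ^ q.toReal) ≤
      ∑' k : Fin n → ℤ,
        (ENNReal.ofReal (jap k ^ s) * (‖aJ n r J k‖₊ : ℝ≥0∞)) ^ q.toReal := by
    calc (J : ℝ≥0∞) * ENNReal.ofReal (jmin n s ^ q.toReal)
        = ∑ _j ∈ Finset.range J, ENNReal.ofReal (jmin n s ^ q.toReal) := by
          rw [Finset.sum_const, Finset.card_range, nsmul_eq_mul]
      _ ≤ ∑ j ∈ Finset.range J, ∑ k ∈ Aux.cube n (2 ^ j),
            (ENNReal.ofReal (jap k ^ s) * (‖aJ n r J k‖₊ : ℝ≥0∞)) ^ q.toReal :=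
          Finset.sum_le_sum hblock
      _ = ∑ k ∈ U, (ENNReal.ofReal (jap k ^ s) * (‖aJ n r J k‖₊ : ℝ≥0∞)) ^ q.toReal := by
          rw [hU, Finset.sum_biUnion (biUnion_disj hn J)]
      _ ≤ _ := ENNReal.sum_le_tsum U
  calc ENNReal.ofReal (jmin n s) * (J : ℝ≥0∞) ^ α
      = ((J : ℝ≥0∞) * ENNReal.ofReal (jmin n s ^ q.toReal)) ^ (1 / q.toReal) := by
        rw [ENNReal.mul_rpow_of_nonneg _ _ (by positivity),
          ENNReal.ofReal_rpow_of_pos (Real.rpow_pos_of_pos (jmin_pos hn s) _),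
          ← Real.rpow_mul (jmin_pos hn s).le,
          mul_one_div_cancel hqt.ne', Real.rpow_one, hα, Aux.one_div_toReal]
        exact mul_comm _ _
    _ ≤ _ := ENNReal.rpow_le_rpow hsum (by positivity)

end Emb

/-- Sharpness of embeddings between weighted `ℓ^q` spaces on `ℤ^n`:
`ℓ^{s₁,0}_{q₁} ⊂ ℓ^{s₂,0}_{q₂}` holds if and only if
(`s₂ ≤ s₁` and `1/q₂ + s₂/n < 1/q₁ + s₁/n`) or (`s₂ = s₁` and `q₂ = q₁`). -/
theorem lq_uniform_embedding_iff (n : ℕ) (hn : 0 < n)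
    (q₁ q₂ : ℝ≥0∞) (s₁ s₂ : ℝ) (hq₁ : 0 < q₁) (hq₂ : 0 < q₂) :
    (∃ C : ℝ≥0, 0 < C ∧ ∀ a : (Fin n → ℤ) → ℂ,
        lqNormZ q₂ s₂ a ≤ C * lqNormZ q₁ s₁ a) ↔
      ((s₂ ≤ s₁ ∧ (1 / q₂).toReal + s₂ / n < (1 / q₁).toReal + s₁ / n) ∨
        (s₂ = s₁ ∧ q₂ = q₁)) := by
  have hnR : (0:ℝ) < (n:ℝ) := by exact_mod_cast hn
  have hq₁0 : q₁ ≠ 0 := hq₁.ne'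
  have hq₂0 : q₂ ≠ 0 := hq₂.ne'
  set α₁ := (1/q₁).toReal with hα₁
  set α₂ := (1/q₂).toReal with hα₂
  have hα₁nn : 0 ≤ α₁ := ENNReal.toReal_nonneg
  have hα₂nn : 0 ≤ α₂ := ENNReal.toReal_nonneg
  constructor
  · rintro ⟨C, hC, hbound⟩
    have hCR : (0:ℝ) < (C:ℝ) := hC
    -- Step 1 : s₂ ≤ s₁, via delta tests
    have hs : s₂ ≤ s₁ := by
      refine Aux.exponent_le (Emb.jmin_pos hn s₂) (mul_pos hCR (Emb.jmax_pos (n := n) s₁)) ?_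
      intro m hm
      have hk := Emb.const_mem_cube (n := n) hm
      have h := hbound (fun k => if k = (fun _ : Fin n => (m:ℤ)) then 1 else 0)
      rw [Emb.lqNormZ_delta hq₂0, Emb.lqNormZ_delta hq₁0] at h
      rw [← ENNReal.ofReal_coe_nnreal, ← ENNReal.ofReal_mul (by positivity)] at h
      have h' := (ENNReal.ofReal_le_ofReal_iff
        (mul_nonneg hCR.le (Real.rpow_nonneg (Aux.jap_pos _).le _))).mp h
      obtain ⟨hlo, _⟩ := Emb.jap_rpow_cube_bounds hn hm s₂ hk
      obtain ⟨_, hhi⟩ := Emb.jap_rpow_cube_bounds hn hm s₁ hk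
      calc Emb.jmin n s₂ * (m:ℝ) ^ s₂ ≤ jap (fun _ : Fin n => (m:ℤ)) ^ s₂ := hlo
        _ ≤ (C:ℝ) * jap (fun _ : Fin n => (m:ℤ)) ^ s₁ := h'
        _ ≤ (C:ℝ) * (Emb.jmax n s₁ * (m:ℝ) ^ s₁) := by
            exact mul_le_mul_of_nonneg_left hhi hCR.le
        _ = ((C:ℝ) * Emb.jmax n s₁) * (m:ℝ) ^ s₁ := by ring
    -- Step 2 : s₂ + n α₂ ≤ s₁ + n α₁, via cube tests
    have hstep2 : s₂ + (n:ℝ) * α₂ ≤ s₁ + (n:ℝ) * α₁ := by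
      refine Aux.exponent_le (Emb.jmin_pos hn s₂) (mul_pos hCR (Emb.jmax_pos (n := n) s₁)) ?_
      intro m hm
      have h := hbound (fun k => if k ∈ Aux.cube n m then (1:ℂ) else 0)
      have h2 := le_trans (Emb.lqNormZ_cube_ge hq₂0 hn s₂ hm)
        (le_trans h (mul_le_mul_right (Emb.lqNormZ_cube_le hq₁0 hn s₁ hm) C))
      rw [← ENNReal.ofReal_coe_nnreal, ← ENNReal.ofReal_mul hCR.le] at h2
      have h3 := (ENNReal.ofReal_le_ofReal_iff
        (mul_nonneg hCR.le (mul_nonneg (Emb.jmax_pos s₁).le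
          (Real.rpow_nonneg (Emb.mpos hm).le _)))).mp h2
      calc Emb.jmin n s₂ * (m:ℝ) ^ (s₂ + (n:ℝ) * α₂) ≤
            (C:ℝ) * (Emb.jmax n s₁ * (m:ℝ) ^ (s₁ + (n:ℝ) * α₁)) := h3
        _ = ((C:ℝ) * Emb.jmax n s₁) * (m:ℝ) ^ (s₁ + (n:ℝ) * α₁) := by ring
    have hdiv : α₂ + s₂/(n:ℝ) ≤ α₁ + s₁/(n:ℝ) := by
      have e₂ : α₂ + s₂/(n:ℝ) = (s₂ + (n:ℝ)*α₂)/(n:ℝ) := by field_simp; ring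
      have e₁ : α₁ + s₁/(n:ℝ) = (s₁ + (n:ℝ)*α₁)/(n:ℝ) := by field_simp; ring
      rw [e₂, e₁]
      gcongr
    rcases eq_or_lt_of_le hdiv with heq | hlt
    · -- boundary case
      have heq' : s₂ + (n:ℝ)*α₂ = s₁ + (n:ℝ)*α₁ := by
        field_simp at heq
        linarith
      rcases eq_or_lt_of_le hs with hseq | hslt
      · -- s₂ = s₁, conclude q₂ = q₁
        right
        refine ⟨hseq, ?_⟩
        have hαeq : α₂ = α₁ := by
          have : (n:ℝ) * α₂ = (n:ℝ) * α₁ := by linarith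
          exact mul_left_cancel₀ hnR.ne' this
        have f₂ : 1/q₂ ≠ ∞ := by
          rw [one_div]
          exact ENNReal.inv_ne_top.mpr hq₂0
        have f₁ : 1/q₁ ≠ ∞ := by
          rw [one_div]
          exact ENNReal.inv_ne_top.mpr hq₁0
        have h2 : (1:ℝ≥0∞)/q₂ = 1/q₁ := (ENNReal.toReal_eq_toReal_iff' f₂ f₁).mp hαeq
        rw [one_div, one_div] at h2
        have h3 := congrArg (·⁻¹) h2
        simpa using h3
      · -- s₂ < s₁ on the boundary : contradiction via layered cubes
        exfalso
        have hαlt : α₁ < α₂ := by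
          by_contra hcon
          push_neg at hcon
          nlinarith
        have hq₂top : q₂ ≠ ∞ := by
          intro h
          have : α₂ = 0 := by rw [hα₂, h]; simp
          linarith
        set r := s₁ + (n:ℝ)*α₁ with hr
        have hsr₁ : s₁ - r = -((n:ℝ)*α₁) := by rw [hr]; ring
        have hsr₂ : s₂ - r = -((n:ℝ)*α₂) := by rw [hr]; linarith
        have hJall : ∀ J : ℕ, 1 ≤ J →
            Emb.jmin n s₂ * (J:ℝ) ^ α₂ ≤ ((C:ℝ) * Emb.jmax n s₁) * (J:ℝ) ^ α₁ := by
          intro J hJ1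
          have h1 := le_trans (Emb.lqNormZ_aJ_ge hq₂0 hq₂top hn s₂ r hsr₂ J)
            (le_trans (hbound (Emb.aJ n r J))
              (mul_le_mul_right (Emb.lqNormZ_aJ_le hq₁0 hn s₁ r hsr₁ J) C))
          rw [Emb.natCast_rpow_eq_ofReal hJ1, Emb.natCast_rpow_eq_ofReal hJ1,
            ← ENNReal.ofReal_mul (Emb.jmin_pos hn s₂).le,
            ← ENNReal.ofReal_mul (Emb.jmax_pos s₁).le,
            ← ENNReal.ofReal_coe_nnreal,
            ← ENNReal.ofReal_mul hCR.le] at h1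
          have h2 := (ENNReal.ofReal_le_ofReal_iff
            (mul_nonneg hCR.le (mul_nonneg (Emb.jmax_pos s₁).le
              (Real.rpow_nonneg (Emb.mpos hJ1).le _)))).mp h1
          calc Emb.jmin n s₂ * (J:ℝ) ^ α₂ ≤
                (C:ℝ) * (Emb.jmax n s₁ * (J:ℝ) ^ α₁) := h2
            _ = ((C:ℝ) * Emb.jmax n s₁) * (J:ℝ) ^ α₁ := by ring
        have := Aux.exponent_le (Emb.jmin_pos hn s₂)
          (mul_pos hCR (Emb.jmax_pos s₁)) hJall
        linarith
    · exact Or.inl ⟨hs, hlt⟩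
  · rintro (⟨hs, hlt⟩ | ⟨rfl, rfl⟩)
    swap
    · exact ⟨1, one_pos, fun a => by rw [ENNReal.coe_one, one_mul]⟩
    rcases le_or_gt q₁ q₂ with hq | hq
    · refine ⟨1, one_pos, fun a => ?_⟩
      rw [ENNReal.coe_one, one_mul]
      calc lqNormZ q₂ s₂ a ≤ lqNormZ q₂ s₁ a := by
            rw [lqNormZ, lqNormZ]
            refine Aux.lqNorm_mono fun k => ?_
            exact mul_le_mul_left (ENNReal.ofReal_le_ofReal
              (Real.rpow_le_rpow_of_exponent_le (Aux.one_le_jap k) hs)) _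
        _ ≤ lqNormZ q₁ s₁ a := by
            rw [lqNormZ, lqNormZ]
            exact Aux.lqNorm_anti hq₁0 hq
    · -- q₂ < q₁
      have hq₂top : q₂ ≠ ∞ := (hq.trans_le le_top).ne
      have hqt₂ : 0 < q₂.toReal := ENNReal.toReal_pos hq₂0 hq₂top
      have hα₂eq : α₂ = 1/q₂.toReal := Aux.one_div_toReal
      have hδn : (n:ℝ)*(α₂ - α₁) < s₁ - s₂ := by
        have e₂ : (n:ℝ) * (s₂ / n) = s₂ := by field_simp
        have e₁ : (n:ℝ) * (s₁ / n) = s₁ := by field_simp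
        nlinarith [mul_lt_mul_of_pos_left hlt hnR]
      set δ := s₁ - s₂ with hδdef
      have hfact : ∀ (a : (Fin n → ℤ) → ℂ) (k : Fin n → ℤ),
          ENNReal.ofReal (jap k ^ s₂) * (‖a k‖₊ : ℝ≥0∞) =
          ENNReal.ofReal (jap k ^ (-δ)) *
            (ENNReal.ofReal (jap k ^ s₁) * (‖a k‖₊ : ℝ≥0∞)) := by
        intro a k
        rw [← mul_assoc, ← ENNReal.ofReal_mul (Real.rpow_nonneg (Aux.jap_pos k).le _),
          ← Real.rpow_add (Aux.jap_pos k)]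
        congr 2
        rw [hδdef]
        ring
      rcases eq_or_ne q₁ ∞ with rfl | hq₁top
      · -- q₁ = ∞
        have hα₁0 : α₁ = 0 := by rw [hα₁]; simp
        have hexp : -δ * q₂.toReal < -(n:ℝ) := by
          have h1 : (n:ℝ) * α₂ < δ := by
            rw [hα₁0] at hδn
            linarith
          rw [hα₂eq] at h1
          have h2 := mul_lt_mul_of_pos_right h1 hqt₂
          rw [mul_assoc, one_div, inv_mul_cancel₀ hqt₂.ne', mul_one] at h2
          linarith
        set K := ∑' k : Fin n → ℤ, ENNReal.ofReal (jap k ^ (-δ * q₂.toReal)) with hK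
        have hKfin : K ≠ ∞ := Aux2.japSummable hn hexp
        set D := K ^ (1/q₂.toReal) with hD
        have hDfin : D ≠ ∞ := ENNReal.rpow_ne_top_of_nonneg (by positivity) hKfin
        refine ⟨1 ⊔ D.toNNReal, lt_of_lt_of_le one_pos le_sup_left, fun a => ?_⟩
        have hDC : D ≤ ((1 ⊔ D.toNNReal : ℝ≥0) : ℝ≥0∞) := by
          rw [← ENNReal.coe_toNNReal hDfin]
          exact ENNReal.coe_le_coe.mpr le_sup_right
        set N₁ := lqNormZ ⊤ s₁ a with hN₁
        have hsup : ∀ k, ENNReal.ofReal (jap k ^ s₁) * (‖a k‖₊ : ℝ≥0∞) ≤ N₁ := by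
          intro k
          rw [hN₁, lqNormZ]
          exact Aux.le_lqNorm (by simp) k
        have key : lqNormZ q₂ s₂ a ≤ D * N₁ := by
          rw [lqNormZ, lqNorm, if_neg hq₂top]
          have hterm : ∀ k : Fin n → ℤ,
              (ENNReal.ofReal (jap k ^ s₂) * (‖a k‖₊ : ℝ≥0∞)) ^ q₂.toReal ≤
                ENNReal.ofReal (jap k ^ (-δ * q₂.toReal)) * N₁ ^ q₂.toReal := by
            intro k
            rw [hfact a k]
            calc (ENNReal.ofReal (jap k ^ (-δ)) *
                  (ENNReal.ofReal (jap k ^ s₁) * (‖a k‖₊ : ℝ≥0∞))) ^ q₂.toReal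
                ≤ (ENNReal.ofReal (jap k ^ (-δ)) * N₁) ^ q₂.toReal :=
                  ENNReal.rpow_le_rpow (mul_le_mul_right (hsup k) _) hqt₂.le
              _ = ENNReal.ofReal (jap k ^ (-δ)) ^ q₂.toReal * N₁ ^ q₂.toReal :=
                  ENNReal.mul_rpow_of_nonneg _ _ hqt₂.le
              _ = ENNReal.ofReal (jap k ^ (-δ * q₂.toReal)) * N₁ ^ q₂.toReal := by
                  rw [ENNReal.ofReal_rpow_of_pos (Real.rpow_pos_of_pos (Aux.jap_pos k) _),
                    ← Real.rpow_mul (Aux.jap_pos k).le]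
          calc (∑' k : Fin n → ℤ,
                (ENNReal.ofReal (jap k ^ s₂) * (‖a k‖₊ : ℝ≥0∞)) ^ q₂.toReal) ^ (1/q₂.toReal)
              ≤ (∑' k : Fin n → ℤ,
                  ENNReal.ofReal (jap k ^ (-δ * q₂.toReal)) * N₁ ^ q₂.toReal) ^ (1/q₂.toReal) :=
                ENNReal.rpow_le_rpow (ENNReal.tsum_le_tsum hterm) (by positivity)
            _ = (K * N₁ ^ q₂.toReal) ^ (1/q₂.toReal) := by rw [ENNReal.tsum_mul_right, hK]
            _ = D * N₁ := by
                rw [ENNReal.mul_rpow_of_nonneg _ _ (by positivity), hD,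
                  ← ENNReal.rpow_mul, mul_one_div_cancel hqt₂.ne', ENNReal.rpow_one]
        exact le_trans key (mul_le_mul_left hDC _)
      · -- q₁ finite
        have hqt₁ : 0 < q₁.toReal := ENNReal.toReal_pos hq₁0 hq₁top
        have hα₁eq : α₁ = 1/q₁.toReal := Aux.one_div_toReal
        have hqtlt : q₂.toReal < q₁.toReal := ENNReal.toReal_strict_mono hq₁top hq
        have hd : 0 < q₁.toReal - q₂.toReal := by linarith
        set p := q₁.toReal / q₂.toReal with hp
        set p' := q₁.toReal / (q₁.toReal - q₂.toReal) with hp'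
        have hp1 : 1 < p := (one_lt_div hqt₂).mpr hqtlt
        have hp'0 : 0 < p' := div_pos hqt₁ hd
        have hconj : p.HolderConjugate p' := by
          rw [Real.holderConjugate_iff]
          refine ⟨hp1, ?_⟩
          rw [hp, hp']
          field_simp
          ring
        have hexp : -δ * q₂.toReal * p' < -(n:ℝ) := by
          have hcore : (n:ℝ) * (q₁.toReal - q₂.toReal) < δ * q₂.toReal * q₁.toReal := by
            rw [hα₂eq, hα₁eq] at hδn
            have h2 := mul_lt_mul_of_pos_right hδn (mul_pos hqt₂ hqt₁)
            have e1 : (n:ℝ) * (1/q₂.toReal - 1/q₁.toReal) * (q₂.toReal * q₁.toReal) =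
                (n:ℝ) * (q₁.toReal - q₂.toReal) := by
              field_simp
            have e2 : δ * (q₂.toReal * q₁.toReal) = δ * q₂.toReal * q₁.toReal := by ring
            rw [e1, e2] at h2
            exact h2
          have h3 : -δ * q₂.toReal * p' = (-δ*q₂.toReal*q₁.toReal)/(q₁.toReal - q₂.toReal) := by
            rw [hp']
            ring
          rw [h3, div_lt_iff₀ hd]
          nlinarith [hcore]
        set K := ∑' k : Fin n → ℤ, ENNReal.ofReal (jap k ^ (-δ * q₂.toReal * p')) with hK
        have hKfin : K ≠ ∞ := Aux2.japSummable hn hexp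
        set D := K ^ (1/p' * (1/q₂.toReal)) with hD
        have hDfin : D ≠ ∞ := ENNReal.rpow_ne_top_of_nonneg (by positivity) hKfin
        refine ⟨1 ⊔ D.toNNReal, lt_of_lt_of_le one_pos le_sup_left, fun a => ?_⟩
        have hDC : D ≤ ((1 ⊔ D.toNNReal : ℝ≥0) : ℝ≥0∞) := by
          rw [← ENNReal.coe_toNNReal hDfin]
          exact ENNReal.coe_le_coe.mpr le_sup_right
        have key : lqNormZ q₂ s₂ a ≤ D * lqNormZ q₁ s₁ a := by
          rw [lqNormZ, lqNormZ, lqNorm, lqNorm, if_neg hq₂top, if_neg hq₁top]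
          set F : (Fin n → ℤ) → ℝ≥0∞ :=
            fun k => (ENNReal.ofReal (jap k ^ s₁) * (‖a k‖₊ : ℝ≥0∞)) ^ q₂.toReal with hF
          set G : (Fin n → ℤ) → ℝ≥0∞ :=
            fun k => ENNReal.ofReal (jap k ^ (-δ)) ^ q₂.toReal with hG
          have hFG : ∀ k : Fin n → ℤ,
              (ENNReal.ofReal (jap k ^ s₂) * (‖a k‖₊ : ℝ≥0∞)) ^ q₂.toReal = F k * G k := by
            intro k
            rw [hfact a k, ENNReal.mul_rpow_of_nonneg _ _ hqt₂.le, hF, hG, mul_comm]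
          have hH := Aux.tsum_mul_le_Lp_mul_Lq hconj F G
          have hFp : ∀ k : Fin n → ℤ, F k ^ p =
              (ENNReal.ofReal (jap k ^ s₁) * (‖a k‖₊ : ℝ≥0∞)) ^ q₁.toReal := by
            intro k
            rw [hF, ← ENNReal.rpow_mul]
            congr 1
            rw [hp]
            field_simp
          have hGp : ∀ k : Fin n → ℤ, G k ^ p' =
              ENNReal.ofReal (jap k ^ (-δ * q₂.toReal * p')) := by
            intro k
            rw [hG, ← ENNReal.rpow_mul,
              ENNReal.ofReal_rpow_of_pos (Real.rpow_pos_of_pos (Aux.jap_pos k) _),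
              ← Real.rpow_mul (Aux.jap_pos k).le, mul_assoc]
          calc (∑' k : Fin n → ℤ,
              (ENNReal.ofReal (jap k ^ s₂) * (‖a k‖₊ : ℝ≥0∞)) ^ q₂.toReal) ^ (1/q₂.toReal)
              = (∑' k : Fin n → ℤ, F k * G k) ^ (1/q₂.toReal) := by rw [tsum_congr hFG]
            _ ≤ ((∑' k, F k ^ p) ^ (1/p) * (∑' k, G k ^ p') ^ (1/p')) ^ (1/q₂.toReal) :=
                ENNReal.rpow_le_rpow hH (by positivity)
            _ = (((∑' k : Fin n → ℤ,
                  (ENNReal.ofReal (jap k ^ s₁) * (‖a k‖₊ : ℝ≥0∞)) ^ q₁.toReal) ^ (1/p)) ^ (1/q₂.toReal)) *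
                ((K ^ (1/p')) ^ (1/q₂.toReal)) := by
                rw [tsum_congr hFp, tsum_congr hGp, hK,
                  ENNReal.mul_rpow_of_nonneg _ _ (by positivity)]
            _ = (∑' k : Fin n → ℤ,
                  (ENNReal.ofReal (jap k ^ s₁) * (‖a k‖₊ : ℝ≥0∞)) ^ q₁.toReal) ^ (1/q₁.toReal) * D := by
                rw [← ENNReal.rpow_mul, ← ENNReal.rpow_mul, hD]
                congr 2
                rw [hp]
                field_simp
            _ = D * (∑' k : Fin n → ℤ,
                  (ENNReal.ofReal (jap k ^ s₁) * (‖a k‖₊ : ℝ≥0∞)) ^ q₁.toReal) ^ (1/q₁.toReal) :=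
                mul_comm _ _
        exact le_trans key (mul_le_mul_left hDC _)

end
end
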